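/- arXiv:2509.18074 — 7 statements merged into one kernel-verified Lean document; each statement's English description precedes it below -/
import Mathlib

section
/- Let f be holomorphic on ℂ minus its set of simple poles {ω_n}, with residues {r_n}, and let (R_N) be a strictly increasing sequence of positive reals tending to ∞ with no pole on any circle |ω| = R_N. If M_N := sup_{|ω| = R_N} |f(ω)| tends to 0 as N → ∞, then for every ω that is not a pole, the partial sums ∑_{n : |ω_n| < R_N} r_n/(ω − ω_n) converge to f(ω) as N → ∞; moreover, for every R > 0 this convergence is uniform on the set {ω : |ω| ≤ R, ω not a pole}. -/
/-!
Fix a circle `‖ζ‖ = R N` carrying no pole and let `g` be `f` minus the principal parts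
`r n / (z - ω n)` of the poles inside it. All singularities of `g` in the closed disc are
removable, so the Cauchy integral formula applies to `g`; the Cauchy integral of each principal
part vanishes, hence `g z = (2πi)⁻¹ ∮ f ζ / (ζ - z) dζ`, which is at most `R N / (R N - ‖z‖) · M N`
with `M N` the maximum of `‖f‖` on the circle. For `‖z‖ ≤ R N / 2` this is at most `2 M N`.
-/

open Complex Filter Topology Metric

/-- Redefining `g` at every point as its limit along `𝓝[≠]` removes all its removable
singularities at once. -/
theorem differentiableAt_limUnder_nhdsNE {g : ℂ → ℂ} {c : ℂ}
    (hd : ∀ᶠ w in 𝓝[≠] c, DifferentiableAt ℂ g w)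
    (hlim : Tendsto (fun w => (w - c) * g w) (𝓝[≠] c) (𝓝 0)) :
    DifferentiableAt ℂ (fun w => limUnder (𝓝[≠] w) g) c := by
  rw [eventually_nhdsWithin_iff] at hd
  have ho : (fun w => g w - g c) =o[𝓝[≠] c] fun w => (w - c)⁻¹ := by
    rw [Asymptotics.isLittleO_iff_tendsto']
    · have hconst : Tendsto (fun w => (w - c) * g c) (𝓝[≠] c) (𝓝 0) := by
        simpa using (((continuous_sub_right c).tendsto c).mul_const (g c)).mono_left
          nhdsWithin_le_nhds
      simpa [div_inv_eq_mul, mul_sub, mul_comm] using hlim.sub hconst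
    · filter_upwards [self_mem_nhdsWithin] with w hw h
      exact absurd (inv_eq_zero.1 h) (sub_ne_zero.2 hw)
  have hupd := Complex.differentiableOn_update_limUnder_of_isLittleO hd
    (fun w hw => (hw.1 hw.2).differentiableWithinAt) ho
  refine (hupd.differentiableAt hd).congr_of_eventuallyEq ?_
  filter_upwards [hd] with w hw
  rcases eq_or_ne w c with rfl | hne
  · simp
  · rw [Function.update_of_ne hne]
    exact ((hw hne).continuousAt.tendsto.mono_left nhdsWithin_le_nhds).limUnder_eq

theorem circleIntegral_sub_inv_mul_div_sub_eq_zero {c z a : ℂ} {R : ℝ} (hz : z ∈ ball c R)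
    (ha : a ∈ ball c R) (hza : z ≠ a) (b : ℂ) :
    (∮ ζ in C(c, R), (ζ - z)⁻¹ * (b / (ζ - a))) = 0 := by
  have hR : 0 ≤ R := dist_nonneg.trans (mem_ball.1 hz).le
  have hns : ∀ w ∈ ball c R, w ∉ sphere c R := fun w hw h => (mem_ball.1 hw).ne (mem_sphere.1 h)
  have hpf : Set.EqOn (fun ζ => (ζ - z)⁻¹ * (b / (ζ - a)))
      (fun ζ => (b / (z - a)) • ((ζ - z)⁻¹ - (ζ - a)⁻¹)) (sphere c R) := by
    intro ζ hζ
    have hζz : ζ - z ≠ 0 := sub_ne_zero.2 (ne_of_mem_of_not_mem hζ (hns z hz))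
    have hζa : ζ - a ≠ 0 := sub_ne_zero.2 (ne_of_mem_of_not_mem hζ (hns a ha))
    simp only [smul_eq_mul, inv_sub_inv hζz hζa]
    field_simp [sub_ne_zero.2 hza]
    ring
  have hint : ∀ w ∈ ball c R, CircleIntegrable (fun ζ => (ζ - w)⁻¹) c R := fun w hw =>
    circleIntegrable_sub_inv_iff.2 (Or.inr (by simpa [abs_of_nonneg hR] using hns w hw))
  rw [circleIntegral.integral_congr hR hpf, circleIntegral.integral_smul,
    circleIntegral.integral_sub (hint z hz) (hint a ha),
    circleIntegral.integral_sub_inv_of_mem_ball hz, circleIntegral.integral_sub_inv_of_mem_ball ha,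
    sub_self, smul_zero]

section PrincipalParts

variable {ι : Type*} {f : ℂ → ℂ} {ω r : ι → ℂ}

theorem eventually_nhdsNE_notMem_range (hfin : ∀ ρ : ℝ, {n | ‖ω n‖ < ρ}.Finite) (z : ℂ) :
    ∀ᶠ w in 𝓝[≠] z, w ∉ Set.range ω := by
  have hnear : ((ω '' {n | ‖ω n‖ < ‖z‖ + 1}) \ {z})ᶜ ∈ 𝓝 z :=
    (((hfin _).image ω).sdiff).isClosed.isOpen_compl.mem_nhds (by simp)
  rw [eventually_nhdsWithin_iff]
  filter_upwards [hnear, ball_mem_nhds z one_pos] with w hw hwz hne hwω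
  obtain ⟨n, rfl⟩ := hwω
  refine hw ⟨⟨n, ?_, rfl⟩, hne⟩
  rw [mem_ball, dist_eq_norm] at hwz
  show ‖ω n‖ < ‖z‖ + 1
  linarith [norm_le_norm_add_norm_sub' (ω n) z]

theorem tendsto_sub_mul_sum_div_sub (hω : Function.Injective ω) (r : ι → ℂ) {S : Finset ι} {m : ι}
    (hm : m ∈ S) :
    Tendsto (fun w => (w - ω m) * ∑ n ∈ S, r n / (w - ω n)) (𝓝[≠] ω m) (𝓝 (r m)) := by
  classical
  have hrest : Tendsto (fun w => ∑ n ∈ S.erase m, (w - ω m) * (r n / (w - ω n)))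
      (𝓝 (ω m)) (𝓝 0) := by
    simpa using tendsto_finsetSum (S.erase m) fun n hn =>
      ((continuous_sub_right (ω m)).tendsto (ω m)).mul
        (tendsto_const_nhds.div ((continuous_sub_right (ω n)).tendsto (ω m))
          (sub_ne_zero.2 fun h => Finset.ne_of_mem_erase hn (hω h.symm)))
  have := (hrest.mono_left (nhdsWithin_le_nhds (s := {ω m}ᶜ))).const_add (r m)
  rw [add_zero] at this
  refine this.congr' ?_
  filter_upwards [self_mem_nhdsWithin] with w hw
  rw [Finset.mul_sum, ← Finset.add_sum_erase S _ hm, mul_div_cancel₀ _ (sub_ne_zero.2 hw)]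

theorem differentiableAt_sub_sum_div_sub (hdiff : ∀ z ∉ Set.range ω, DifferentiableAt ℂ f z)
    (S : Finset ι) {w : ℂ} (hw : w ∉ Set.range ω) :
    DifferentiableAt ℂ (fun z => f z - ∑ n ∈ S, r n / (z - ω n)) w :=
  (hdiff w hw).sub <| DifferentiableAt.fun_sum fun n _ =>
    (differentiableAt_const _).div (differentiableAt_id.sub_const _)
      (sub_ne_zero.2 fun h => hw ⟨n, h.symm⟩)

theorem differentiableAt_limUnder_sub_sum_div_sub (hω : Function.Injective ω)
    (hfin : ∀ ρ : ℝ, {n | ‖ω n‖ < ρ}.Finite) (hdiff : ∀ z ∉ Set.range ω, DifferentiableAt ℂ f z)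
    (hres : ∀ n, Tendsto (fun z => (z - ω n) * f z) (𝓝[≠] ω n) (𝓝 (r n)))
    {S : Finset ι} {c : ℂ} (hc : ∀ n, ω n = c → n ∈ S) :
    DifferentiableAt ℂ
      (fun w => limUnder (𝓝[≠] w) fun z => f z - ∑ n ∈ S, r n / (z - ω n)) c := by
  refine differentiableAt_limUnder_nhdsNE ((eventually_nhdsNE_notMem_range hfin c).mono
    fun w hw => differentiableAt_sub_sum_div_sub hdiff S hw) ?_
  by_cases hcω : c ∈ Set.range ω
  · obtain ⟨m, rfl⟩ := hcω
    simpa [mul_sub] using (hres m).sub (tendsto_sub_mul_sum_div_sub hω r (hc m rfl))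
  · simpa using (((continuous_sub_right c).tendsto c).mul
      (differentiableAt_sub_sum_div_sub hdiff S hcω).continuousAt.tendsto).mono_left
        nhdsWithin_le_nhds

theorem sub_sum_div_sub_eq_circleIntegral (hω : Function.Injective ω)
    (hfin : ∀ ρ : ℝ, {n | ‖ω n‖ < ρ}.Finite) (hdiff : ∀ z ∉ Set.range ω, DifferentiableAt ℂ f z)
    (hres : ∀ n, Tendsto (fun z => (z - ω n) * f z) (𝓝[≠] ω n) (𝓝 (r n)))
    {S : Finset ι} {ρ : ℝ} (hS : ∀ n, n ∈ S ↔ ‖ω n‖ < ρ) (hρ : ∀ n, ‖ω n‖ ≠ ρ) {z : ℂ}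
    (hz : ‖z‖ < ρ) (hzω : z ∉ Set.range ω) :
    f z - ∑ n ∈ S, r n / (z - ω n) = (2 * Real.pi * I : ℂ)⁻¹ • ∮ ζ in C(0, ρ), (ζ - z)⁻¹ * f ζ := by
  set g : ℂ → ℂ := fun w => f w - ∑ n ∈ S, r n / (w - ω n)
  have hsphere : ∀ ζ ∈ sphere (0 : ℂ) ρ, ζ ∉ Set.range ω := by
    rintro ζ hζ ⟨n, rfl⟩
    exact hρ n (mem_sphere_zero_iff_norm.1 hζ)
  have hzball : z ∈ ball (0 : ℂ) ρ := mem_ball_zero_iff.2 hz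
  have hρ0 : 0 ≤ ρ := (norm_nonneg z).trans hz.le
  have hG : ∀ w ∈ closedBall (0 : ℂ) ρ, DifferentiableAt ℂ (fun w => limUnder (𝓝[≠] w) g) w :=
    fun w hw => differentiableAt_limUnder_sub_sum_div_sub hω hfin hdiff hres fun n hn =>
      (hS n).2 ((hn ▸ mem_closedBall_zero_iff.1 hw).lt_of_ne (hρ n))
  have hGg : ∀ w ∉ Set.range ω, limUnder (𝓝[≠] w) g = g w := fun w hw =>
    ((differentiableAt_sub_sum_div_sub hdiff S hw).continuousAt.tendsto.mono_left
      nhdsWithin_le_nhds).limUnder_eq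
  have hcauchy := two_pi_I_inv_smul_circleIntegral_sub_inv_smul_of_differentiable_on_off_countable
    Set.countable_empty hzball (fun w hw => (hG w hw).continuousAt.continuousWithinAt)
    fun w hw => hG w (ball_subset_closedBall hw.1)
  have hkernel : ContinuousOn (fun ζ : ℂ => (ζ - z)⁻¹) (sphere 0 ρ) :=
    (continuous_sub_right z).continuousOn.inv₀ fun ζ hζ =>
      sub_ne_zero.2 (ne_of_mem_of_not_mem hζ fun h => hz.ne (mem_sphere_zero_iff_norm.1 h))
  have hfint : CircleIntegrable (fun ζ => (ζ - z)⁻¹ * f ζ) 0 ρ :=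
    (hkernel.mul fun ζ hζ => (hdiff ζ (hsphere ζ hζ)).continuousAt.continuousWithinAt
      ).circleIntegrable hρ0
  have hpint : ∀ n ∈ S, CircleIntegrable (fun ζ => (ζ - z)⁻¹ * (r n / (ζ - ω n))) 0 ρ :=
    fun n _ => (hkernel.mul (continuousOn_const.div (continuous_sub_right _).continuousOn
      fun ζ hζ => sub_ne_zero.2 fun h => hsphere ζ hζ ⟨n, h.symm⟩)).circleIntegrable hρ0
  change g z = _
  rw [← hGg z hzω, ← hcauchy, circleIntegral.integral_congr hρ0
      (g := fun ζ => (ζ - z)⁻¹ * f ζ - ∑ n ∈ S, (ζ - z)⁻¹ * (r n / (ζ - ω n))) fun ζ hζ => by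
        simp only [hGg ζ (hsphere ζ hζ), g, smul_eq_mul, mul_sub, Finset.mul_sum],
    circleIntegral.integral_sub hfint (.fun_sum S hpint), circleIntegral.integral_fun_sum hpint,
    Finset.sum_eq_zero fun n hn => circleIntegral_sub_inv_mul_div_sub_eq_zero hzball
      (mem_ball_zero_iff.2 ((hS n).1 hn)) (fun h => hzω ⟨n, h.symm⟩) (r n), sub_zero]

theorem norm_sub_sum_div_sub_le (hω : Function.Injective ω)
    (hfin : ∀ ρ : ℝ, {n | ‖ω n‖ < ρ}.Finite) (hdiff : ∀ z ∉ Set.range ω, DifferentiableAt ℂ f z)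
    (hres : ∀ n, Tendsto (fun z => (z - ω n) * f z) (𝓝[≠] ω n) (𝓝 (r n)))
    {S : Finset ι} {ρ M : ℝ} (hS : ∀ n, n ∈ S ↔ ‖ω n‖ < ρ) (hρ : ∀ n, ‖ω n‖ ≠ ρ)
    (hM : ∀ ζ ∈ sphere (0 : ℂ) ρ, ‖f ζ‖ ≤ M) {z : ℂ} (hz : ‖z‖ < ρ) (hzω : z ∉ Set.range ω) :
    ‖f z - ∑ n ∈ S, r n / (z - ω n)‖ ≤ ρ / (ρ - ‖z‖) * M := by
  rw [sub_sum_div_sub_eq_circleIntegral hω hfin hdiff hres hS hρ hz hzω]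
  refine (circleIntegral.norm_two_pi_i_inv_smul_integral_le_of_norm_le_const
    (C := (ρ - ‖z‖)⁻¹ * M) ((norm_nonneg z).trans hz.le) fun ζ hζ => ?_).trans_eq (by ring)
  have hdist : ρ - ‖z‖ ≤ ‖ζ - z‖ := by
    simpa [mem_sphere_zero_iff_norm.1 hζ] using norm_sub_norm_le ζ z
  rw [norm_mul, norm_inv]
  gcongr
  exact hM ζ hζ

end PrincipalParts

theorem tendstoUniformlyOn_of_norm_sub_le_div_mul {F : ℕ → ℂ → ℂ} {f : ℂ → ℂ} {s : Set ℂ}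
    {R M : ℕ → ℝ} (hR : Tendsto R atTop atTop) (hM : Tendsto M atTop (𝓝 0))
    (hbound : ∀ N, ∀ z ∈ s, ‖z‖ < R N → ‖f z - F N z‖ ≤ R N / (R N - ‖z‖) * M N) (ρ : ℝ) :
    TendstoUniformlyOn F f atTop {z | ‖z‖ ≤ ρ ∧ z ∈ s} := by
  rw [Metric.tendstoUniformlyOn_iff]
  intro ε hε
  have hMabs : Tendsto (fun N => |M N|) atTop (𝓝 0) := by simpa using hM.abs
  filter_upwards [hR.eventually_gt_atTop (2 * ρ), hMabs.eventually (gt_mem_nhds (half_pos hε))]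
    with N hRN hMN
  rintro z ⟨hzρ, hzs⟩
  have hz : ‖z‖ < R N := by linarith [norm_nonneg z]
  have hratio : R N / (R N - ‖z‖) ≤ 2 := by
    rw [div_le_iff₀ (by linarith)]
    linarith
  rw [dist_eq_norm]
  calc _ ≤ R N / (R N - ‖z‖) * M N := hbound N z hzs hz
    _ ≤ R N / (R N - ‖z‖) * |M N| :=
      mul_le_mul_of_nonneg_left (le_abs_self _)
        (div_nonneg (by linarith [norm_nonneg z]) (by linarith))
    _ ≤ 2 * |M N| := by gcongr
    _ < ε := by linarith

theorem stmt_0_general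
    (f : ℂ → ℂ) (ω r : ℕ → ℂ) (R : ℕ → ℝ)
    (hω_inj : Function.Injective ω)
    (hfin : ∀ ρ : ℝ, {n : ℕ | ‖ω n‖ < ρ}.Finite)
    (hdiff : ∀ z : ℂ, z ∉ Set.range ω → DifferentiableAt ℂ f z)
    (hres : ∀ n, Tendsto (fun z => (z - ω n) * f z) (𝓝[≠] ω n) (𝓝 (r n)))
    (hRtop : Tendsto R atTop atTop)
    (hRavoid : ∀ n N, ‖ω n‖ ≠ R N)
    (hM : Tendsto (fun N => sSup ((fun z => ‖f z‖) '' sphere (0 : ℂ) (R N)))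
      atTop (𝓝 0)) :
    (∀ z : ℂ, z ∉ Set.range ω →
      Tendsto (fun N => ∑ n ∈ (hfin (R N)).toFinset, r n / (z - ω n)) atTop (𝓝 (f z))) ∧
    ∀ ρ : ℝ, 0 < ρ →
      TendstoUniformlyOn (fun N z => ∑ n ∈ (hfin (R N)).toFinset, r n / (z - ω n)) f atTop
        {z : ℂ | ‖z‖ ≤ ρ ∧ z ∉ Set.range ω} := by
  have hfM : ∀ N, ∀ ζ ∈ sphere (0 : ℂ) (R N), ‖f ζ‖ ≤ sSup ((fun z => ‖f z‖) '' sphere 0 (R N)) :=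
    fun N ζ hζ => le_csSup ((isCompact_sphere 0 (R N)).bddAbove_image fun w hw =>
      (hdiff w fun ⟨n, hn⟩ => hRavoid n N (by rwa [hn, ← mem_sphere_zero_iff_norm])
        ).continuousAt.norm.continuousWithinAt) ⟨ζ, hζ, rfl⟩
  have huniform := fun ρ => tendstoUniformlyOn_of_norm_sub_le_div_mul (s := (Set.range ω)ᶜ)
    (F := fun N z => ∑ n ∈ (hfin (R N)).toFinset, r n / (z - ω n)) hRtop hM
    (fun N z hzω hz => norm_sub_sum_div_sub_le hω_inj hfin hdiff hres
      (fun n => (hfin (R N)).mem_toFinset) (fun n => hRavoid n N) (hfM N) hz hzω) ρ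
  exact ⟨fun z hz => (huniform (‖z‖ + 1)).tendsto_at ⟨by linarith, hz⟩, fun ρ _ => huniform ρ⟩

/-- Partial fractions decomposition of a meromorphic function whose maximum modulus
on a sequence of expanding circles tends to zero. -/
theorem stmt_0
    (f : ℂ → ℂ) (ω r : ℕ → ℂ) (R : ℕ → ℝ)
    (hω_inj : Function.Injective ω)
    (hfin : ∀ ρ : ℝ, {n : ℕ | ‖ω n‖ < ρ}.Finite)
    (hdiff : ∀ z : ℂ, z ∉ Set.range ω → DifferentiableAt ℂ f z)
    (hr : ∀ n, r n ≠ 0)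
    (hres : ∀ n, Tendsto (fun z => (z - ω n) * f z) (𝓝[≠] ω n) (𝓝 (r n)))
    (hRpos : ∀ N, 0 < R N)
    (hRmono : StrictMono R)
    (hRtop : Tendsto R atTop atTop)
    (hRavoid : ∀ n N, ‖ω n‖ ≠ R N)
    (hM : Tendsto (fun N => sSup ((fun z => ‖f z‖) '' sphere (0 : ℂ) (R N)))
      atTop (𝓝 0)) :
    (∀ z : ℂ, z ∉ Set.range ω →
      Tendsto (fun N => ∑ n ∈ (hfin (R N)).toFinset, r n / (z - ω n)) atTop (𝓝 (f z))) ∧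
    ∀ ρ : ℝ, 0 < ρ →
      TendstoUniformlyOn (fun N z => ∑ n ∈ (hfin (R N)).toFinset, r n / (z - ω n)) f atTop
        {z : ℂ | ‖z‖ ≤ ρ ∧ z ∉ Set.range ω} :=
  stmt_0_general f ω r R hω_inj hfin hdiff hres hRtop hRavoid hM
end

section
/- Let w_m = d·(m + ξ) for m ≥ 1 with d = |d|e^{iθ} a nonzero complex number and ξ ∈ ℂ, each w_m nonzero, and let (δ_m) be complex numbers with |δ_m| ≤ K·m^{−ε} for some constants K > 0 and ε > 0. Fix an angle φ with e^{iφ} ≠ e^{iθ}, and assume r·e^{iφ} ≠ w_m and r·e^{iφ} ≠ w_m + δ_m for all r > 0 and all m. Then r · ∑_{m=1}^{∞} [1/(r e^{iφ} − w_m) − 1/(r e^{iφ} − w_m − δ_m)] tends to 0 as r → ∞ (in particular the series converges for all sufficiently large r). -/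
/-!
Put `ω = r e^{iφ}`. Because `e^{iφ}` and `d / |d|` are distinct unit vectors, the law of cosines
gives `|a e^{iφ} - b d/|d|| ≥ c (a + b)` for `a, b ≥ 0`; absorbing the bounded shifts `dξ` and
`dξ + δ_m`, both `|ω - w_m|` and `|ω - w_m - δ_m|` are `≥ c (r + m)` for large `r`. The
`m`-th term equals `δ_m / ((ω - w_m)(ω - w_m - δ_m))`, so `r` times it is at most
`K m^{-ε} r / (c (r + m))² ≤ K m^{-ε} / (c² (r + m))`: this is summable in `m` uniformly in `r` and
tends to `0` for each fixed `m`, and dominated convergence concludes.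
-/

open Complex Filter Topology
open scoped RealInnerProductSpace

section InnerProductSpace

variable {E : Type*} [NormedAddCommGroup E] [InnerProductSpace ℝ E] {u v : E}

lemma sq_add_mul_le_norm_smul_sub_smul_sq (hu : ‖u‖ = 1) (hv : ‖v‖ = 1) (a b : ℝ) :
    (1 - ⟪u, v⟫) / 2 * (a + b) ^ 2 ≤ ‖a • u - b • v‖ ^ 2 := by
  have hexpand : ‖a • u - b • v‖ ^ 2 = a ^ 2 + b ^ 2 - 2 * (a * b) * ⟪u, v⟫ := by
    rw [norm_sub_sq_real, norm_smul, norm_smul, real_inner_smul_left, real_inner_smul_right,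
      hu, hv, Real.norm_eq_abs, Real.norm_eq_abs, mul_one, mul_one, sq_abs, sq_abs]
    ring
  -- the difference of the two sides is `(1 + ⟪u, v⟫) / 2 * (a - b) ^ 2`
  nlinarith [neg_one_le_real_inner_of_norm_eq_one hu hv, sq_nonneg (a - b)]

lemma exists_pos_mul_add_le_norm_smul_sub_smul (hu : ‖u‖ = 1) (hv : ‖v‖ = 1) (huv : u ≠ v) :
    ∃ c > 0, ∀ a b : ℝ, c * (a + b) ≤ ‖a • u - b • v‖ := by
  have hlt : ⟪u, v⟫ < 1 := (inner_lt_one_iff_real_of_norm_eq_one hu hv).2 huv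
  refine ⟨√((1 - ⟪u, v⟫) / 2), by positivity, fun a b => ?_⟩
  calc √((1 - ⟪u, v⟫) / 2) * (a + b) ≤ √((1 - ⟪u, v⟫) / 2) * |a + b| := by
        gcongr; exact le_abs_self _
    _ = √((1 - ⟪u, v⟫) / 2 * (a + b) ^ 2) := by
        rw [Real.sqrt_mul (by linarith), Real.sqrt_sq_eq_abs]
    _ ≤ √(‖a • u - b • v‖ ^ 2) :=
        Real.sqrt_le_sqrt (sq_add_mul_le_norm_smul_sub_smul_sq hu hv a b)
    _ = ‖a • u - b • v‖ := Real.sqrt_sq (norm_nonneg _)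

lemma exists_pos_eventually_mul_add_le_norm_smul_sub_smul_sub (hu : ‖u‖ = 1) (hv : ‖v‖ = 1)
    (huv : u ≠ v) (M : ℝ) :
    ∃ c > 0, ∀ᶠ a : ℝ in atTop, ∀ b : ℝ, 0 ≤ b → ∀ z : E, ‖z‖ ≤ M →
      c * (a + b) ≤ ‖a • u - b • v - z‖ := by
  obtain ⟨c, hc, hsep⟩ := exists_pos_mul_add_le_norm_smul_sub_smul hu hv huv
  refine ⟨c / 2, by positivity, ?_⟩
  filter_upwards [eventually_ge_atTop (2 * M / c)] with a ha b hb z hz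
  have hMa : 2 * M ≤ c * a := by rwa [div_le_iff₀' hc] at ha
  calc c / 2 * (a + b) ≤ c * (a + b) - ‖z‖ := by nlinarith
    _ ≤ ‖a • u - b • v‖ - ‖z‖ := by gcongr; exact hsep a b
    _ ≤ ‖a • u - b • v - z‖ := norm_sub_norm_le _ _

end InnerProductSpace

lemma exists_pos_eventually_mul_add_le_norm_mul_sub_mul_sub {u d : ℂ} (hu : ‖u‖ = 1)
    (hd : d ≠ 0) (hud : u ≠ d / ‖d‖) (M : ℝ) :
    ∃ c > 0, ∀ᶠ r : ℝ in atTop, ∀ x : ℝ, 0 ≤ x → ∀ z : ℂ, ‖z‖ ≤ M →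
      c * (r + x) ≤ ‖r * u - d * x - z‖ := by
  have hd' : 0 < ‖d‖ := norm_pos_iff.2 hd
  have hv : ‖d / ‖d‖‖ = 1 := by
    rw [norm_div, Complex.norm_real, Real.norm_of_nonneg hd'.le, div_self hd'.ne']
  obtain ⟨c, hc, hfar⟩ := exists_pos_eventually_mul_add_le_norm_smul_sub_smul_sub hu hv hud M
  refine ⟨c * min 1 ‖d‖, by positivity, ?_⟩
  filter_upwards [hfar, eventually_ge_atTop 0] with r hr hr0 x hx z hz
  have hrescale : (r : ℂ) * u - d * x = r • u - (‖d‖ * x) • (d / ‖d‖) := by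
    rw [Complex.real_smul, Complex.real_smul]
    have : (‖d‖ : ℂ) ≠ 0 := mod_cast hd'.ne'
    push_cast
    field_simp
  calc c * min 1 ‖d‖ * (r + x) = c * (min 1 ‖d‖ * r + min 1 ‖d‖ * x) := by ring
    _ ≤ c * (r + ‖d‖ * x) := by
        gcongr
        · exact mul_le_of_le_one_left hr0 (min_le_left _ _)
        · exact min_le_right _ _
    _ ≤ ‖r * u - d * x - z‖ := by
        rw [hrescale]; exact hr _ (by positivity) z hz

lemma norm_one_div_sub_one_div_le {𝕜 : Type*} [NormedField 𝕜] {a b : 𝕜} {ρ : ℝ} (hρ : 0 < ρ)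
    (ha : ρ ≤ ‖a‖) (hb : ρ ≤ ‖b‖) : ‖1 / a - 1 / b‖ ≤ ‖a - b‖ / ρ ^ 2 := by
  have ha0 : a ≠ 0 := norm_pos_iff.1 (hρ.trans_le ha)
  have hb0 : b ≠ 0 := norm_pos_iff.1 (hρ.trans_le hb)
  rw [one_div, one_div, inv_sub_inv ha0 hb0, norm_div, norm_mul, norm_sub_rev, sq]
  gcongr

lemma mul_div_add_sq_le_div_add {a r x : ℝ} (ha : 0 ≤ a) (hr : 0 ≤ r) (hx : 0 ≤ x) :
    r * (a / (r + x) ^ 2) ≤ a / (r + x) := by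
  rcases (add_nonneg hr hx).eq_or_lt with h | h
  · rw [← h]; simp
  · rw [mul_div_assoc', div_le_div_iff₀ (by positivity) h]
    nlinarith [mul_nonneg ha hx, mul_nonneg ha hr]

lemma summable_rpow_neg_div_nat_add_one {ε : ℝ} (hε : 0 < ε) :
    Summable (fun m : ℕ => ((m : ℝ) + 1) ^ (-ε) / ((m : ℝ) + 1)) := by
  refine ((Real.summable_one_div_nat_add_rpow 1 (1 + ε)).2 (by linarith)).congr fun m => ?_
  have hm : (0 : ℝ) < m + 1 := by positivity
  rw [abs_of_pos hm, Real.rpow_add hm, Real.rpow_one, Real.rpow_neg hm.le]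
  field_simp

theorem tendsto_mul_tsum_of_norm_le {F : ℝ → ℕ → ℂ} {C ε : ℝ} (hC : 0 ≤ C) (hε : 0 < ε)
    (hF : ∀ᶠ r in atTop, ∀ m : ℕ, ‖F r m‖ ≤ C * ((m : ℝ) + 1) ^ (-ε) / (r + (m + 1)) ^ 2) :
    (∀ᶠ r in atTop, Summable (F r)) ∧
      Tendsto (fun r : ℝ => (r : ℂ) * ∑' m, F r m) atTop (𝓝 0) := by
  have hrF : ∀ᶠ r : ℝ in atTop, ∀ m : ℕ,
      ‖(r : ℂ) * F r m‖ ≤ C * ((m : ℝ) + 1) ^ (-ε) / (r + (m + 1)) := by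
    filter_upwards [hF, eventually_ge_atTop 0] with r hr hr0 m
    rw [norm_mul, Complex.norm_real, Real.norm_of_nonneg hr0]
    exact (mul_le_mul_of_nonneg_left (hr m) hr0).trans
      (mul_div_add_sq_le_div_add (by positivity) hr0 (by positivity))
  have hdom : ∀ᶠ r : ℝ in atTop, ∀ m : ℕ,
      ‖(r : ℂ) * F r m‖ ≤ C * (((m : ℝ) + 1) ^ (-ε) / (m + 1)) := by
    filter_upwards [hrF, eventually_ge_atTop 0] with r hr hr0 m
    refine (hr m).trans ?_
    rw [mul_div_assoc]
    gcongr C * (_ / ?_)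
    linarith
  have hpointwise (m : ℕ) : Tendsto (fun r : ℝ => (r : ℂ) * F r m) atTop (𝓝 0) := by
    refine squeeze_zero_norm' ?_ (by simpa using
      (tendsto_inv_atTop_zero (𝕜 := ℝ)).const_mul (C * ((m : ℝ) + 1) ^ (-ε)))
    filter_upwards [hrF, eventually_gt_atTop 0] with r hr hr0
    refine (hr m).trans ?_
    rw [div_eq_mul_inv]
    gcongr
    linarith
  have hsum := (summable_rpow_neg_div_nat_add_one hε).mul_left C
  refine ⟨?_, ?_⟩
  · filter_upwards [hdom, eventually_gt_atTop 0] with r hr hr0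
    simpa [hr0.ne'] using ((Summable.of_norm_bounded hsum hr).mul_left (r⁻¹ : ℂ))
  · simpa [tsum_mul_left] using tendsto_tsum_of_dominated_convergence hsum hpointwise hdom

theorem stmt_3_general
    (d ξ : ℂ) (δ : ℕ → ℂ) (K ε φ : ℝ)
    (hd : d ≠ 0)
    (hK : 0 < K) (hε : 0 < ε)
    (hδ : ∀ m : ℕ, ‖δ m‖ ≤ K * ((m : ℝ) + 1) ^ (-ε))
    (hφ : Complex.exp ((φ : ℂ) * Complex.I) ≠ d / ((‖d‖ : ℝ) : ℂ)) :
    (∀ᶠ r : ℝ in atTop, Summable (fun m : ℕ =>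
        1 / ((r : ℂ) * Complex.exp ((φ : ℂ) * Complex.I) - d * ((m : ℂ) + 1 + ξ)) -
        1 / ((r : ℂ) * Complex.exp ((φ : ℂ) * Complex.I) - d * ((m : ℂ) + 1 + ξ) - δ m))) ∧
    Tendsto (fun r : ℝ => (r : ℂ) * ∑' m : ℕ,
        (1 / ((r : ℂ) * Complex.exp ((φ : ℂ) * Complex.I) - d * ((m : ℂ) + 1 + ξ)) -
         1 / ((r : ℂ) * Complex.exp ((φ : ℂ) * Complex.I) - d * ((m : ℂ) + 1 + ξ) - δ m)))
      atTop (𝓝 0) := by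
  obtain ⟨c, hc, hfar⟩ := exists_pos_eventually_mul_add_le_norm_mul_sub_mul_sub
    (norm_exp_ofReal_mul_I φ) hd hφ (‖d * ξ‖ + K)
  refine tendsto_mul_tsum_of_norm_le (C := K / c ^ 2) (by positivity) hε ?_
  filter_upwards [hfar, eventually_ge_atTop 0] with r hr hr0 m
  have hδK : ‖δ m‖ ≤ K := (hδ m).trans <| mul_le_of_le_one_right hK.le <|
    Real.rpow_le_one_of_one_le_of_nonpos (by linarith [m.cast_nonneg (α := ℝ)]) (by linarith)
  set ω := (r : ℂ) * Complex.exp ((φ : ℂ) * Complex.I)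
  have hA : c * (r + (m + 1)) ≤ ‖ω - d * ((m : ℂ) + 1 + ξ)‖ := by
    convert hr (m + 1) (by positivity) (d * ξ) (by linarith) using 2
    push_cast; ring
  have hB : c * (r + (m + 1)) ≤ ‖ω - d * ((m : ℂ) + 1 + ξ) - δ m‖ := by
    convert hr (m + 1) (by positivity) (d * ξ + δ m) ((norm_add_le _ _).trans (by linarith))
      using 2
    push_cast; ring
  calc _ ≤ ‖δ m‖ / (c * (r + (m + 1))) ^ 2 := by
        simpa using norm_one_div_sub_one_div_le (by positivity) hA hB
    _ = ‖δ m‖ / c ^ 2 / (r + (m + 1)) ^ 2 := by rw [mul_pow, div_div]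
    _ ≤ K / c ^ 2 * ((m : ℝ) + 1) ^ (-ε) / (r + (m + 1)) ^ 2 := by
        rw [div_mul_eq_mul_div]
        gcongr
        exact hδ m

/-- Along any ray avoiding the asymptotic direction of the lattice `w_m = d(m+ξ)`,
the sum of differences `1/(ω - w_m) - 1/(ω - w_m - δ_m)` decays faster than `1/|ω|`,
provided the perturbations satisfy `|δ_m| ≤ K m^{-ε}`. -/
theorem stmt_3
    (d ξ : ℂ) (δ : ℕ → ℂ) (K ε φ : ℝ)
    (hd : d ≠ 0)
    (hw0 : ∀ m : ℕ, d * ((m : ℂ) + 1 + ξ) ≠ 0)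
    (hK : 0 < K) (hε : 0 < ε)
    (hδ : ∀ m : ℕ, ‖δ m‖ ≤ K * ((m : ℝ) + 1) ^ (-ε))
    (hφ : Complex.exp ((φ : ℂ) * Complex.I) ≠ d / ((‖d‖ : ℝ) : ℂ))
    (havoid : ∀ r : ℝ, 0 < r → ∀ m : ℕ,
      (r : ℂ) * Complex.exp ((φ : ℂ) * Complex.I) ≠ d * ((m : ℂ) + 1 + ξ) ∧
      (r : ℂ) * Complex.exp ((φ : ℂ) * Complex.I) ≠ d * ((m : ℂ) + 1 + ξ) + δ m) :
    (∀ᶠ r : ℝ in atTop, Summable (fun m : ℕ =>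
        1 / ((r : ℂ) * Complex.exp ((φ : ℂ) * Complex.I) - d * ((m : ℂ) + 1 + ξ)) -
        1 / ((r : ℂ) * Complex.exp ((φ : ℂ) * Complex.I) - d * ((m : ℂ) + 1 + ξ) - δ m))) ∧
    Tendsto (fun r : ℝ => (r : ℂ) * ∑' m : ℕ,
        (1 / ((r : ℂ) * Complex.exp ((φ : ℂ) * Complex.I) - d * ((m : ℂ) + 1 + ξ)) -
         1 / ((r : ℂ) * Complex.exp ((φ : ℂ) * Complex.I) - d * ((m : ℂ) + 1 + ξ) - δ m)))
      atTop (𝓝 0) :=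
  stmt_3_general d ξ δ K ε φ hd hK hε hδ hφ
end

section
/- Let G be a meromorphic-type function with simple zeros (z_n) and simple poles (p_n) as in the context, with 0 neither a zero nor a pole. If there is a constant C > 0 such that for every N, |G'(ω)/G(ω)| ≤ C/R_N for all ω with |ω| = R_N, then the sequence S_N := ∑_{n : |p_n| < R_N} 1/p_n − ∑_{n : |z_n| < R_N} 1/z_n converges as N → ∞, and its limit equals G'(0)/G(0). -/
/-!
The function `w ↦ G'(w) / (G(w) w)` has simple poles at `0`, at each zero `z_n` and at each pole
`p_n` of `G`, with residues `G'(0)/G(0)`, `1/z_n` and `-1/p_n` respectively (near a point where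
`G = (w - a)^k K` with `K(a) ≠ 0`, the logarithmic derivative is `k/(w - a) + K'/K`). By the
residue theorem, `2πi (G'(0)/G(0) + ∑ 1/z_n - ∑ 1/p_n)` is its integral over `|w| = R_N`, which the
bound `|G'/G| ≤ C/R_N` makes `O(1/R_N)`.
-/

open Complex Filter Topology Metric Set Real

lemma isClosed_range_of_forall_finite_norm_lt {ι E : Type*} [NormedAddCommGroup E] {p : ι → E}
    (hp : ∀ r : ℝ, {i | ‖p i‖ < r}.Finite) : IsClosed (range p) := by
  refine (isClosed_and_discrete_iff.2 fun x => disjoint_principal_right.2 ?_).1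
  have hnear : {w : E | ‖w‖ < ‖x‖ + 1} ∈ 𝓝[≠] x :=
    nhdsWithin_le_nhds <| (isOpen_lt continuous_norm continuous_const).mem_nhds (lt_add_one ‖x‖)
  have : Finite (p '' {i | ‖p i‖ < ‖x‖ + 1}) := ((hp _).image p).to_subtype
  filter_upwards [nhdsNE_of_nhdsNE_sdiff_finite hnear this] with w hw
  rintro ⟨i, rfl⟩
  exact hw.2 ⟨i, hw.1, rfl⟩

lemma isLittleO_sub_inv_of_tendsto_sub_mul {g : ℂ → ℂ} {a : ℂ}
    (h : Tendsto (fun w => (w - a) * g w) (𝓝[≠] a) (𝓝 0)) :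
    (fun w => g w - g a) =o[𝓝[≠] a] fun w => (w - a)⁻¹ := by
  have hinv : ∀ᶠ w in 𝓝[≠] a, (w - a)⁻¹ = 0 → g w - g a = 0 :=
    eventually_nhdsWithin_of_forall fun w hw h0 => absurd h0 (inv_ne_zero (sub_ne_zero.2 hw))
  rw [Asymptotics.isLittleO_iff_tendsto' hinv]
  have hlin : Tendsto (fun w => (w - a) * g a) (𝓝[≠] a) (𝓝 0) := by
    simpa using ((tendsto_id.sub_const a).mul_const (g a)).mono_left (nhdsWithin_le_nhds (a := a))
  have hprod : Tendsto (fun w => (w - a) * g w - (w - a) * g a) (𝓝[≠] a) (𝓝 0) := by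
    simpa using h.sub hlin
  refine hprod.congr fun w => ?_
  rw [div_inv_eq_mul]
  ring

lemma circleIntegral_eq_zero_of_tendsto_sub_mul {c : ℂ} {R : ℝ} (hR : 0 ≤ R) {g : ℂ → ℂ}
    {s : Finset ℂ} (hs : ↑s ⊆ ball c R)
    (hg : ∀ w ∈ closedBall c R, w ∉ s → DifferentiableAt ℂ g w)
    (hlim : ∀ a ∈ s, Tendsto (fun w => (w - a) * g w) (𝓝[≠] a) (𝓝 0)) :
    ∮ w in C(c, R), g w = 0 := by
  classical
  set g' : ℂ → ℂ := fun w => if w ∈ s then limUnder (𝓝[≠] w) g else g w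
  have hg'_off : ∀ w ∉ s, g' =ᶠ[𝓝 w] g := fun w hw => by
    filter_upwards [s.finite_toSet.isClosed.isOpen_compl.mem_nhds hw] with u hu
    simp [g', show u ∉ s from hu]
  have hg'_cont : ContinuousOn g' (closedBall c R) := by
    intro w hw
    refine ContinuousAt.continuousWithinAt ?_
    by_cases hws : w ∈ s
    · have hpunct : ball c R \ ↑s ∈ 𝓝[≠] w := nhdsNE_of_nhdsNE_sdiff_finite
        (nhdsWithin_le_nhds (isOpen_ball.mem_nhds (hs hws))) s.finite_toSet.to_subtype
      have hd : ∀ᶠ u in 𝓝[≠] w, DifferentiableAt ℂ g u := by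
        filter_upwards [hpunct] with u hu using hg u (ball_subset_closedBall hu.1) hu.2
      have hg'g : g =ᶠ[𝓝[≠] w] g' := by
        filter_upwards [hpunct] with u hu
        simp [g', show u ∉ s from hu.2]
      rw [continuousAt_iff_punctured_nhds]
      simpa [g', hws] using (tendsto_limUnder_of_differentiable_on_punctured_nhds_of_isLittleO hd
        (isLittleO_sub_inv_of_tendsto_sub_mul (hlim w hws))).congr' hg'g
    · exact (hg w hw hws).continuousAt.congr (hg'_off w hws).symm
  have hzero : ∮ w in C(c, R), g' w = 0 :=
    circleIntegral_eq_zero_of_differentiable_on_off_countable hR s.countable_toSet hg'_cont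
      fun w hw => (hg w (ball_subset_closedBall hw.1) hw.2).congr_of_eventuallyEq (hg'_off w hw.2)
  rw [← hzero]
  refine circleIntegral.integral_congr hR fun w hw => ?_
  have hws : w ∉ s := fun hws => sphere_disjoint_ball.ne_of_mem hw (hs hws) rfl
  simp [g', hws]

lemma tendsto_sub_mul_sum_mul_sub_inv {s : Finset ℂ} {res : ℂ → ℂ} {a : ℂ} (ha : a ∈ s) :
    Tendsto (fun w => (w - a) * ∑ b ∈ s, res b * (w - b)⁻¹) (𝓝[≠] a) (𝓝 (res a)) := by
  have hcont : ContinuousAt (fun w => res a + ∑ b ∈ s.erase a, res b * ((w - a) * (w - b)⁻¹)) a :=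
    continuousAt_const.add <| tendsto_finsetSum _ fun b hb =>
      continuousAt_const.mul <| (continuousAt_id.sub continuousAt_const).mul <|
        (continuousAt_id.sub continuousAt_const).inv₀
          (sub_ne_zero.2 (Finset.ne_of_mem_erase hb).symm)
  have hlim := hcont.tendsto.mono_left (nhdsWithin_le_nhds (s := {a}ᶜ))
  simp only [sub_self, zero_mul, mul_zero, Finset.sum_const_zero, add_zero] at hlim
  refine hlim.congr' ?_
  filter_upwards [self_mem_nhdsWithin] with w hw
  rw [← Finset.add_sum_erase s _ ha, mul_add, Finset.mul_sum, ← mul_assoc, mul_comm (w - a),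
    mul_assoc, mul_inv_cancel₀ (sub_ne_zero.2 hw), mul_one]
  exact congrArg _ (Finset.sum_congr rfl fun b _ => by ring)

theorem circleIntegral_eq_two_pi_I_mul_sum_of_simple_poles {c : ℂ} {R : ℝ} (hR : 0 ≤ R)
    {f res : ℂ → ℂ} {s : Finset ℂ} (hs : ↑s ⊆ ball c R)
    (hf : ∀ w ∈ closedBall c R, w ∉ s → DifferentiableAt ℂ f w)
    (hres : ∀ a ∈ s, Tendsto (fun w => (w - a) * f w) (𝓝[≠] a) (𝓝 (res a))) :
    ∮ w in C(c, R), f w = 2 * π * I * ∑ a ∈ s, res a := by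
  -- `f - P` has removable singularities at the points of `s`.
  set P : ℂ → ℂ := fun w => ∑ a ∈ s, res a * (w - a)⁻¹
  have hP : ∀ w ∉ s, DifferentiableAt ℂ P w := fun w hw =>
    DifferentiableAt.fun_sum fun a ha => (differentiableAt_const _).mul <|
      (differentiableAt_id.sub_const a).inv (sub_ne_zero.2 (ne_of_mem_of_not_mem ha hw).symm)
  have hsphere : ∀ w ∈ sphere c R, w ∉ s := fun w hw hws =>
    sphere_disjoint_ball.ne_of_mem hw (hs hws) rfl
  have hintegrable : ∀ h : ℂ → ℂ, (∀ w ∈ sphere c R, DifferentiableAt ℂ h w) →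
      CircleIntegrable h c R := fun h hh =>
    ContinuousOn.circleIntegrable hR fun w hw => (hh w hw).continuousAt.continuousWithinAt
  have hPint : ∮ w in C(c, R), P w = 2 * π * I * ∑ a ∈ s, res a := by
    rw [circleIntegral.integral_fun_sum, Finset.mul_sum]
    · refine Finset.sum_congr rfl fun a ha => ?_
      rw [circleIntegral.integral_const_mul, circleIntegral.integral_sub_inv_of_mem_ball (hs ha),
        mul_comm]
    · exact fun a ha => hintegrable _ fun w hw => (differentiableAt_const _).mul <|
        (differentiableAt_id.sub_const a).inv
          (sub_ne_zero.2 (ne_of_mem_of_not_mem ha (hsphere w hw)).symm)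
  have hrem : ∮ w in C(c, R), (f w - P w) = 0 := by
    refine circleIntegral_eq_zero_of_tendsto_sub_mul hR hs
      (fun w hw hws => (hf w hw hws).sub (hP w hws)) fun a ha => ?_
    simpa [mul_sub] using (hres a ha).sub (tendsto_sub_mul_sum_mul_sub_inv (res := res) ha)
  rw [← hPint, ← sub_eq_zero, ← circleIntegral.integral_sub, hrem]
  · exact hintegrable f fun w hw =>
      hf w (sphere_subset_closedBall hw) (hsphere w hw)
  · exact hintegrable P fun w hw => hP w (hsphere w hw)

lemma tendsto_sub_mul_logDeriv_of_eventuallyEq_zpow_mul {G K : ℂ → ℂ} {a : ℂ} {n : ℤ}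
    (hK : AnalyticAt ℂ K a) (hKa : K a ≠ 0)
    (hG : G =ᶠ[𝓝[≠] a] fun w => (w - a) ^ n * K w) :
    Tendsto (fun w => (w - a) * logDeriv G w) (𝓝[≠] a) (𝓝 n) := by
  have hcont : ContinuousAt (fun w => n + (w - a) * logDeriv K w) a :=
    continuousAt_const.add <| (continuousAt_id.sub continuousAt_const).mul <|
      hK.deriv.continuousAt.div hK.continuousAt hKa
  have hlim := hcont.tendsto.mono_left (nhdsWithin_le_nhds (s := {a}ᶜ))
  simp only [sub_self, zero_mul, add_zero] at hlim
  refine hlim.congr' ?_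
  filter_upwards [logDeriv_congr_nhdsNE hG, self_mem_nhdsWithin,
    nhdsWithin_le_nhds hK.eventually_analyticAt,
    nhdsWithin_le_nhds (hK.continuousAt.eventually_ne hKa)] with w hGw hw hKw hKw0
  have hwa : w - a ≠ 0 := sub_ne_zero.2 hw
  rw [hGw, logDeriv_mul (f := fun w => (w - a) ^ n) w (zpow_ne_zero _ hwa) hKw0
    ((differentiableAt_id.sub_const a).zpow (Or.inl hwa)) hKw.differentiableAt,
    logDeriv_fun_zpow (f := fun w => w - a) (differentiableAt_id.sub_const a),
    logDeriv_apply (fun w => w - a), deriv_sub_const, deriv_id'']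
  field_simp

lemma tendsto_sub_mul_logDeriv_of_simple_zero {G : ℂ → ℂ} {a : ℂ} (hG : AnalyticAt ℂ G a)
    (hGa : G a = 0) (hG'a : deriv G a ≠ 0) :
    Tendsto (fun w => (w - a) * logDeriv G w) (𝓝[≠] a) (𝓝 1) := by
  have hslope : AnalyticAt ℂ (dslope G a) a :=
    ((Complex.differentiableOn_dslope (hG.eventually_analyticAt)).2
      fun w hw => hw.differentiableAt.differentiableWithinAt).analyticAt hG.eventually_analyticAt
  have hfac : G =ᶠ[𝓝[≠] a] fun w => (w - a) ^ (1 : ℤ) * dslope G a w :=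
    Eventually.of_forall fun w => by
      simpa [hGa, smul_eq_mul] using (sub_smul_dslope G a w).symm
  simpa using tendsto_sub_mul_logDeriv_of_eventuallyEq_zpow_mul hslope
    (by rwa [dslope_same]) hfac

lemma tendsto_sub_mul_logDeriv_of_simple_pole {G : ℂ → ℂ} {a ρ : ℂ}
    (hG : ∀ᶠ w in 𝓝[≠] a, DifferentiableAt ℂ G w) (hρ : ρ ≠ 0)
    (hlim : Tendsto (fun w => (w - a) * G w) (𝓝[≠] a) (𝓝 ρ)) :
    Tendsto (fun w => (w - a) * logDeriv G w) (𝓝[≠] a) (𝓝 (-1)) := by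
  classical
  set K := Function.update (fun w => (w - a) * G w) a ρ
  have hKG : ∀ w ≠ a, K w = (w - a) * G w := fun w hw => Function.update_of_ne hw _ _
  have hK : AnalyticAt ℂ K a := by
    refine Complex.analyticAt_of_differentiable_on_punctured_nhds_of_continuousAt ?_
      (continuousAt_update_same.2 hlim)
    filter_upwards [hG, self_mem_nhdsWithin] with w hGw hw
    refine ((differentiableAt_id.sub_const a).mul hGw).congr_of_eventuallyEq ?_
    filter_upwards [eventually_ne_nhds hw] with u hu using hKG u hu
  have hfac : G =ᶠ[𝓝[≠] a] fun w => (w - a) ^ (-1 : ℤ) * K w := by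
    filter_upwards [self_mem_nhdsWithin] with w hw
    rw [hKG w hw, zpow_neg_one, inv_mul_cancel_left₀ (sub_ne_zero.2 hw)]
  simpa using tendsto_sub_mul_logDeriv_of_eventuallyEq_zpow_mul hK
    (by simpa [K] using hρ) hfac

lemma tendsto_sub_mul_div_self {φ : ℂ → ℂ} {a r : ℂ} (ha : a ≠ 0)
    (h : Tendsto (fun w => (w - a) * φ w) (𝓝[≠] a) (𝓝 r)) :
    Tendsto (fun w => (w - a) * (φ w / w)) (𝓝[≠] a) (𝓝 (r / a)) :=
  (h.div (tendsto_id.mono_left nhdsWithin_le_nhds) ha).congr fun _ => mul_div_assoc _ _ _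

theorem circleIntegral_logDeriv_div_eq {R : ℝ} (hR : 0 < R) {G : ℂ → ℂ} {Z P : Finset ℂ}
    (hZ : (Z : Set ℂ) ⊆ ball 0 R) (hP : (P : Set ℂ) ⊆ ball 0 R)
    (h0Z : 0 ∉ Z) (h0P : 0 ∉ P) (hZP : Disjoint Z P)
    (hG : ∀ w ∈ closedBall 0 R, w ∉ P → AnalyticAt ℂ G w)
    (hG_ne : ∀ w ∈ closedBall 0 R, w ∉ Z → w ∉ P → G w ≠ 0)
    (hZ_simple : ∀ a ∈ Z, G a = 0 ∧ deriv G a ≠ 0)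
    (hP_simple : ∀ a ∈ P, ∃ ρ ≠ 0, Tendsto (fun w => (w - a) * G w) (𝓝[≠] a) (𝓝 ρ)) :
    ∮ w in C(0, R), logDeriv G w / w =
      2 * π * I * (logDeriv G 0 + ∑ a ∈ Z, 1 / a - ∑ a ∈ P, 1 / a) := by
  have h0 : (0 : ℂ) ∈ closedBall 0 R := mem_closedBall_self hR.le
  have hres0 : Tendsto (fun w => (w - 0) * (logDeriv G w / w)) (𝓝[≠] 0) (𝓝 (logDeriv G 0)) := by
    have hG0 := hG 0 h0 h0P
    refine ((hG0.deriv.continuousAt.div hG0.continuousAt (hG_ne 0 h0 h0Z h0P)).tendsto.mono_left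
      nhdsWithin_le_nhds).congr' ?_
    filter_upwards [self_mem_nhdsWithin] with w hw
    rw [sub_zero, mul_div_cancel₀ _ hw]
    rfl
  have hresZ : ∀ a ∈ Z, Tendsto (fun w => (w - a) * (logDeriv G w / w)) (𝓝[≠] a) (𝓝 (1 / a)) :=
    fun a ha => tendsto_sub_mul_div_self (ne_of_mem_of_not_mem ha h0Z) <|
      tendsto_sub_mul_logDeriv_of_simple_zero (hG a (ball_subset_closedBall (hZ ha))
        (Finset.disjoint_left.1 hZP ha)) (hZ_simple a ha).1 (hZ_simple a ha).2
  have hresP : ∀ a ∈ P, Tendsto (fun w => (w - a) * (logDeriv G w / w)) (𝓝[≠] a)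
      (𝓝 (-1 / a)) := fun a ha => by
    obtain ⟨ρ, hρ, hlim⟩ := hP_simple a ha
    have hpunct : ball 0 R \ ↑P ∈ 𝓝[≠] a := nhdsNE_of_nhdsNE_sdiff_finite
      (nhdsWithin_le_nhds (isOpen_ball.mem_nhds (hP ha))) P.finite_toSet.to_subtype
    have hd : ∀ᶠ w in 𝓝[≠] a, DifferentiableAt ℂ G w := by
      filter_upwards [hpunct] with w hw
      exact (hG w (ball_subset_closedBall hw.1) hw.2).differentiableAt
    exact tendsto_sub_mul_div_self (ne_of_mem_of_not_mem ha h0P) <|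
      tendsto_sub_mul_logDeriv_of_simple_pole hd hρ hlim
  have h0ZP : 0 ∉ Z ∪ P := by simp [h0Z, h0P]
  rw [circleIntegral_eq_two_pi_I_mul_sum_of_simple_poles hR.le (s := insert 0 (Z ∪ P))
    (res := fun a => limUnder (𝓝[≠] a) fun w => (w - a) * (logDeriv G w / w)),
    Finset.sum_insert h0ZP, Finset.sum_union hZP, hres0.limUnder_eq,
    Finset.sum_congr rfl fun a ha => (hresZ a ha).limUnder_eq,
    Finset.sum_congr rfl fun a ha => (hresP a ha).limUnder_eq]
  · simp only [neg_div, Finset.sum_neg_distrib]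
    ring
  · simp only [Finset.coe_insert, Finset.coe_union, Set.insert_subset_iff, Set.union_subset_iff]
    exact ⟨mem_ball_self hR, hZ, hP⟩
  · intro w hw hws
    simp only [Finset.mem_insert, Finset.mem_union, not_or] at hws
    obtain ⟨hw0, hwZ, hwP⟩ := hws
    have hGw := hG w hw hwP
    exact (hGw.deriv.differentiableAt.div hGw.differentiableAt (hG_ne w hw hwZ hwP)).div
      differentiableAt_id hw0
  · intro a ha
    refine tendsto_nhds_limUnder ?_
    simp only [Finset.mem_insert, Finset.mem_union] at ha
    rcases ha with rfl | ha | ha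
    exacts [⟨_, hres0⟩, ⟨_, hresZ a ha⟩, ⟨_, hresP a ha⟩]

theorem circleIntegral_logDeriv_div_eq_of_sequences {G : ℂ → ℂ} {z p : ℕ → ℂ} {r : ℝ}
    (hr : 0 < r)
    (hz_inj : Function.Injective z) (hp_inj : Function.Injective p)
    (hz0 : ∀ n, z n ≠ 0) (hp0 : ∀ n, p n ≠ 0) (hdisj : ∀ n m, z n ≠ p m)
    (hzfin : {n | ‖z n‖ < r}.Finite) (hpfin : {n | ‖p n‖ < r}.Finite)
    (hz_r : ∀ n, ‖z n‖ ≠ r) (hp_r : ∀ n, ‖p n‖ ≠ r)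
    (hG : ∀ w ∉ range p, AnalyticAt ℂ G w) (hzero_iff : ∀ w, G w = 0 ↔ ∃ n, w = z n)
    (hzsimple : ∀ n, deriv G (z n) ≠ 0)
    (hpole : ∀ n, ∃ ρ ≠ 0, Tendsto (fun w => (w - p n) * G w) (𝓝[≠] p n) (𝓝 ρ)) :
    ∮ w in C(0, r), logDeriv G w / w = 2 * π * I *
      (logDeriv G 0 + ∑ n ∈ hzfin.toFinset, 1 / z n - ∑ n ∈ hpfin.toFinset, 1 / p n) := by
  have hinside : ∀ {f : ℕ → ℂ} (hf : {n | ‖f n‖ < r}.Finite), (∀ n, ‖f n‖ ≠ r) →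
      ∀ n, f n ∈ closedBall 0 r → f n ∈ hf.toFinset.image f := fun hf hf_r n hn =>
    Finset.mem_image_of_mem _ <| hf.mem_toFinset.2 <|
      (mem_closedBall_zero_iff.1 hn).lt_of_ne (hf_r n)
  have hball : ∀ {f : ℕ → ℂ} (hf : {n | ‖f n‖ < r}.Finite),
      (hf.toFinset.image f : Set ℂ) ⊆ ball 0 r := fun hf w hw => by
    obtain ⟨n, hn, rfl⟩ := Finset.mem_image.1 hw
    exact mem_ball_zero_iff.2 (hf.mem_toFinset.1 hn)
  rw [← Finset.sum_image fun _ _ _ _ h => hz_inj h, ← Finset.sum_image fun _ _ _ _ h => hp_inj h]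
  refine circleIntegral_logDeriv_div_eq hr (hball hzfin) (hball hpfin) ?_ ?_ ?_ ?_ ?_ ?_ ?_
  · simpa [eq_comm] using fun n _ => hz0 n
  · simpa [eq_comm] using fun n _ => hp0 n
  · simpa [Finset.disjoint_left] using fun n _ m _ => (hdisj n m).symm
  · refine fun w hw hwP => hG w ?_
    rintro ⟨n, rfl⟩
    exact hwP (hinside hpfin hp_r n hw)
  · rintro w hw hwZ - hGw
    obtain ⟨n, rfl⟩ := (hzero_iff w).1 hGw
    exact hwZ (hinside hzfin hz_r n hw)
  · simpa using fun n _ => ⟨(hzero_iff _).2 ⟨n, rfl⟩, hzsimple n⟩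
  · simpa using fun n _ => hpole n

lemma tendsto_circleIntegral_div_self_of_norm_le {ι : Type*} {l : Filter ι} {f : ℂ → ℂ}
    {R : ι → ℝ} {C : ℝ} (hR : ∀ i, 0 < R i) (hR_top : Tendsto R l atTop)
    (hf : ∀ i, ∀ w : ℂ, ‖w‖ = R i → ‖f w‖ ≤ C / R i) :
    Tendsto (fun i => ∮ w in C(0, R i), f w / w) l (𝓝 0) := by
  refine squeeze_zero_norm (fun i => ?_) (tendsto_const_nhds.div_atTop hR_top (a := 2 * π * C))
  have hbound : ∀ w ∈ sphere (0 : ℂ) (R i), ‖f w / w‖ ≤ C / R i / R i := fun w hw => by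
    have hw : ‖w‖ = R i := mem_sphere_zero_iff_norm.1 hw
    rw [norm_div, hw]
    exact div_le_div_of_nonneg_right (hf i w hw) (hR i).le
  calc ‖∮ w in C(0, R i), f w / w‖ ≤ 2 * π * R i * (C / R i / R i) :=
        circleIntegral.norm_integral_le_of_norm_le_const (hR i).le hbound
    _ = 2 * π * C / R i := by field_simp [(hR i).ne']

theorem stmt_5_general
    (G : ℂ → ℂ) (z p ρ : ℕ → ℂ) (R : ℕ → ℝ) (C : ℝ)
    (hz_inj : Function.Injective z) (hp_inj : Function.Injective p)
    (hz0 : ∀ n, z n ≠ 0) (hp0 : ∀ n, p n ≠ 0)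
    (hdisj : ∀ n m, z n ≠ p m)
    (hzfin : ∀ r : ℝ, {n : ℕ | ‖z n‖ < r}.Finite)
    (hpfin : ∀ r : ℝ, {n : ℕ | ‖p n‖ < r}.Finite)
    (hdiff : ∀ w : ℂ, w ∉ Set.range p → DifferentiableAt ℂ G w)
    (hzero_iff : ∀ w : ℂ, G w = 0 ↔ ∃ n, w = z n)
    (hzsimple : ∀ n, deriv G (z n) ≠ 0)
    (hres : ∀ n, ρ n ≠ 0 ∧ Tendsto (fun w => (w - p n) * G w) (𝓝[≠] p n) (𝓝 (ρ n)))
    (hRpos : ∀ N, 0 < R N) (hRtop : Tendsto R atTop atTop)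
    (hRavoid : ∀ n N, ‖z n‖ ≠ R N ∧ ‖p n‖ ≠ R N)
    (hbound : ∀ N, ∀ w : ℂ, ‖w‖ = R N →
      ‖deriv G w / G w‖ ≤ C / R N) :
    Tendsto (fun N =>
        (∑ n ∈ (hpfin (R N)).toFinset, 1 / p n) - ∑ n ∈ (hzfin (R N)).toFinset, 1 / z n)
      atTop (𝓝 (deriv G 0 / G 0)) := by
  have hopen : IsOpen (range p)ᶜ := (isClosed_range_of_forall_finite_norm_lt hpfin).isOpen_compl
  have hG : ∀ w ∉ range p, AnalyticAt ℂ G w := fun w hw =>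
    Complex.analyticAt_iff_eventually_differentiableAt.2 ((hopen.eventually_mem hw).mono hdiff)
  have hsum : ∀ N, (∑ n ∈ (hpfin (R N)).toFinset, 1 / p n) - ∑ n ∈ (hzfin (R N)).toFinset, 1 / z n
      = logDeriv G 0 - (2 * π * I)⁻¹ * ∮ w in C(0, R N), logDeriv G w / w := fun N => by
    rw [circleIntegral_logDeriv_div_eq_of_sequences (hRpos N) hz_inj hp_inj hz0 hp0 hdisj
      (hzfin (R N)) (hpfin (R N)) (fun n => (hRavoid n N).1) (fun n => (hRavoid n N).2) hG
      hzero_iff hzsimple fun n => ⟨ρ n, hres n⟩, inv_mul_cancel_left₀ (by simp [pi_ne_zero])]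
    ring
  have hI := tendsto_circleIntegral_div_self_of_norm_le hRpos hRtop hbound
  have hlim := (tendsto_const_nhds (x := logDeriv G 0)).sub (hI.const_mul (2 * π * I)⁻¹)
  rw [mul_zero, sub_zero] at hlim
  exact hlim.congr fun N => (hsum N).symm

/-- If the logarithmic derivative of `G` is bounded by `C / R_N` on the circles `|ω| = R_N`,
then `∑_{|p_n|<R_N} 1/p_n − ∑_{|z_n|<R_N} 1/z_n` converges as `N → ∞` to `G'(0)/G(0)`. -/
theorem stmt_5
    (G : ℂ → ℂ) (z p ρ : ℕ → ℂ) (R : ℕ → ℝ) (C : ℝ)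
    (hz_inj : Function.Injective z) (hp_inj : Function.Injective p)
    (hz0 : ∀ n, z n ≠ 0) (hp0 : ∀ n, p n ≠ 0)
    (hdisj : ∀ n m, z n ≠ p m)
    (hzfin : ∀ r : ℝ, {n : ℕ | ‖z n‖ < r}.Finite)
    (hpfin : ∀ r : ℝ, {n : ℕ | ‖p n‖ < r}.Finite)
    (hdiff : ∀ w : ℂ, w ∉ Set.range p → DifferentiableAt ℂ G w)
    (hzero_iff : ∀ w : ℂ, G w = 0 ↔ ∃ n, w = z n)
    (hzsimple : ∀ n, deriv G (z n) ≠ 0)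
    (hres : ∀ n, ρ n ≠ 0 ∧ Tendsto (fun w => (w - p n) * G w) (𝓝[≠] p n) (𝓝 (ρ n)))
    (hRpos : ∀ N, 0 < R N) (hRmono : StrictMono R) (hRtop : Tendsto R atTop atTop)
    (hRavoid : ∀ n N, ‖z n‖ ≠ R N ∧ ‖p n‖ ≠ R N)
    (hC : 0 < C)
    (hbound : ∀ N, ∀ w : ℂ, ‖w‖ = R N →
      ‖deriv G w / G w‖ ≤ C / R N) :
    Tendsto (fun N =>
        (∑ n ∈ (hpfin (R N)).toFinset, 1 / p n) - ∑ n ∈ (hzfin (R N)).toFinset, 1 / z n)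
      atTop (𝓝 (deriv G 0 / G 0)) :=
  stmt_5_general G z p ρ R C hz_inj hp_inj hz0 hp0 hdisj hzfin hpfin hdiff hzero_iff hzsimple hres
    hRpos hRtop hRavoid hbound
end

section
/- (Residues from the thermal product formula.) Let P : ℂ → ℂ be the locally uniform limit on ℂ of the partial products ∏_{m < N} (1 − ω²/p_m²). Fix an index n, and assume the family (1 − p_n²/p_m²)_{m ≠ n} is multipliable with infinite product Π_n ≠ 0. Then (ω − p_n)·μ·sinh(βω/2)/P(ω) → −μ·p_n·sinh(β p_n/2)/(2·Π_n) as ω → p_n with ω ≠ p_n; i.e. the function ρ(ω) = μ·sinh(βω/2)/P(ω) has residue −μ·p_n·sinh(β p_n/2)/(2·∏_{m ≠ n}(1 − p_n²/p_m²)) at p_n. -/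
/-!
At `p n` the factor `1 - ω²/p_n²` vanishes with derivative `-2/p_n`, so each partial product
with `N > n` has a simple zero there, with derivative `-2/p_n` times the product of the other
factors. Derivatives of holomorphic functions pass to locally uniform limits, hence
`P(p_n) = 0` and `P'(p_n) = -2 Π_n / p_n ≠ 0`, and the residue of `μ sinh(βω/2)/P(ω)` at the
simple zero `p_n` of `P` is `μ sinh(β p_n/2) / P'(p_n)`.
-/

open Complex Filter Topology

theorem tendsto_sub_mul_div_of_hasDerivAt {𝕜 : Type*} [NontriviallyNormedField 𝕜]
    {f g : 𝕜 → 𝕜} {a f' : 𝕜} (hf : HasDerivAt f f' a) (hfa : f a = 0) (hf' : f' ≠ 0)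
    (hg : ContinuousAt g a) :
    Tendsto (fun z => (z - a) * (g z / f z)) (𝓝[≠] a) (𝓝 (g a / f')) := by
  have hslope : slope f a = fun z => f z / (z - a) := by
    ext z
    rw [slope_def_field, hfa, sub_zero]
  refine ((hg.mono_left nhdsWithin_le_nhds).div (hasDerivAt_iff_tendsto_slope.1 hf) hf').congr
    fun z => ?_
  rw [Pi.div_apply, hslope, div_div_eq_mul_div, mul_comm, mul_div_assoc]

theorem hasDerivAt_of_tendstoLocallyUniformly {ι E : Type*} [NormedAddCommGroup E]
    [NormedSpace ℂ E] [CompleteSpace E] {l : Filter ι} [l.NeBot] {F : ι → ℂ → E} {f : ℂ → E}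
    (hF : TendstoLocallyUniformly F f l) (hFd : ∀ i, Differentiable ℂ (F i)) {z : ℂ} {L : E}
    (hL : Tendsto (fun i => deriv (F i) z) l (𝓝 L)) :
    HasDerivAt f L z := by
  have hF' := tendstoLocallyUniformlyOn_univ.2 hF
  have hFd' : ∀ᶠ i in l, DifferentiableOn ℂ (F i) Set.univ :=
    Eventually.of_forall fun i => (hFd i).differentiableOn
  have hfd : DifferentiableAt ℂ f z :=
    (hF'.differentiableOn hFd' isOpen_univ).differentiableAt Filter.univ_mem
  have hderiv : deriv f z = L :=
    tendsto_nhds_unique ((hF'.deriv hFd' isOpen_univ).tendsto_at (Set.mem_univ z)) hL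
  exact hderiv ▸ hfd.hasDerivAt

theorem HasDerivAt.finsetProd_of_eq_zero {ι 𝕜 : Type*} [DecidableEq ι]
    [NontriviallyNormedField 𝕜] {s : Finset ι} {f : ι → 𝕜 → 𝕜} {i : ι} {a d : 𝕜} (hi : i ∈ s)
    (hfi : HasDerivAt (f i) d a) (hfa : f i a = 0)
    (hf : ∀ j ∈ s.erase i, DifferentiableAt 𝕜 (f j) a) :
    HasDerivAt (fun z => ∏ j ∈ s, f j z) (d * ∏ j ∈ s.erase i, f j a) a := by
  have hsplit : (fun z => ∏ j ∈ s, f j z) = fun z => f i z * ∏ j ∈ s.erase i, f j z := by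
    ext z
    exact (Finset.mul_prod_erase s (f · z) hi).symm
  rw [hsplit]
  refine (hfi.fun_mul (HasDerivAt.fun_finsetProd fun j hj => (hf j hj).hasDerivAt)).congr_deriv ?_
  rw [hfa, zero_mul, add_zero]

theorem Multipliable.tendsto_prod_range_erase {M : Type*} [CommMonoid M] [TopologicalSpace M]
    {f : ℕ → M} {n : ℕ} (hf : Multipliable fun m : {m : ℕ // m ≠ n} => f m) :
    Tendsto (fun N => ∏ m ∈ (Finset.range N).erase n, f m) atTop
      (𝓝 (∏' m : {m : ℕ // m ≠ n}, f m)) := by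
  have hprod : HasProd (Set.mulIndicator {n}ᶜ f) (∏' m : {m : ℕ // m ≠ n}, f m) :=
    hasProd_subtype_iff_mulIndicator.1 hf.hasProd
  refine hprod.tendsto_prod_nat.congr fun N => ?_
  rw [Finset.prod_mulIndicator_eq_prod_filter]
  congr 1
  ext m
  simp [and_comm]

theorem hasDerivAt_prod_one_sub_sq_div_sq {ι : Type*} [DecidableEq ι] {s : Finset ι}
    {p : ι → ℂ} {n : ι} (hn : n ∈ s) (hpn : p n ≠ 0) :
    HasDerivAt (fun ω => ∏ m ∈ s, (1 - ω ^ 2 / p m ^ 2))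
      (-2 / p n * ∏ m ∈ s.erase n, (1 - p n ^ 2 / p m ^ 2)) (p n) := by
  have hfactor : HasDerivAt (fun ω => 1 - ω ^ 2 / p n ^ 2) (-2 / p n) (p n) := by
    refine (((hasDerivAt_pow 2 (p n)).div_const (p n ^ 2)).const_sub 1).congr_deriv ?_
    field_simp
    norm_num [mul_comm]
  refine hfactor.finsetProd_of_eq_zero hn (by field_simp; ring) fun m _ => ?_
  fun_prop

theorem stmt_8_general
    (β : ℝ) (μ : ℂ) (p : ℕ → ℂ)
    (hp0 : ∀ m, p m ≠ 0)
    (P : ℂ → ℂ)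
    (hP : TendstoLocallyUniformly
      (fun N ω => ∏ m ∈ Finset.range N, (1 - ω ^ 2 / (p m) ^ 2)) P atTop)
    (n : ℕ)
    (hmul : Multipliable (fun m : {m : ℕ // m ≠ n} => 1 - (p n) ^ 2 / (p m) ^ 2))
    (hPi : (∏' m : {m : ℕ // m ≠ n}, (1 - (p n) ^ 2 / (p m) ^ 2)) ≠ 0) :
    Tendsto (fun ω => (ω - p n) * (μ * Complex.sinh ((β : ℂ) * ω / 2) / P ω)) (𝓝[≠] p n)
      (𝓝 (-μ * p n * Complex.sinh ((β : ℂ) * p n / 2) /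
        (2 * ∏' m : {m : ℕ // m ≠ n}, (1 - (p n) ^ 2 / (p m) ^ 2)))) := by
  set prodₙ := ∏' m : {m : ℕ // m ≠ n}, (1 - p n ^ 2 / p m ^ 2)
  have hpn := hp0 n
  have hFd : ∀ N, Differentiable ℂ fun ω => ∏ m ∈ Finset.range N, (1 - ω ^ 2 / p m ^ 2) :=
    fun N => by fun_prop
  have hderiv_pn : Tendsto (fun N => deriv (fun ω => ∏ m ∈ Finset.range N, (1 - ω ^ 2 / p m ^ 2))
      (p n)) atTop (𝓝 (-2 / p n * prodₙ)) := by
    refine ((Multipliable.tendsto_prod_range_erase (f := fun m => 1 - p n ^ 2 / p m ^ 2)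
      hmul).const_mul _).congr' ?_
    filter_upwards [eventually_gt_atTop n] with N hN
    exact (hasDerivAt_prod_one_sub_sq_div_sq (Finset.mem_range.2 hN) hpn).deriv.symm
  have hP_pn : P (p n) = 0 := by
    refine tendsto_nhds_unique ((tendstoLocallyUniformlyOn_univ.2 hP).tendsto_at
      (Set.mem_univ (p n))) (tendsto_const_nhds.congr' ?_)
    filter_upwards [eventually_gt_atTop n] with N hN
    exact (Finset.prod_eq_zero (Finset.mem_range.2 hN) (by field_simp; ring)).symm
  have hres := tendsto_sub_mul_div_of_hasDerivAt
    (hasDerivAt_of_tendstoLocallyUniformly hP hFd hderiv_pn) hP_pn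
    (mul_ne_zero (div_ne_zero (neg_ne_zero.2 two_ne_zero) hpn) hPi)
    (g := fun ω => μ * Complex.sinh ((β : ℂ) * ω / 2)) (by fun_prop)
  convert hres using 2
  field_simp

/-- Residues from the thermal product formula: the spectral function
`ρ(ω) = μ sinh(βω/2) / P(ω)` has residue
`−μ p_n sinh(β p_n / 2) / (2 ∏_{m ≠ n} (1 − p_n²/p_m²))` at the pole `p_n`. -/
theorem stmt_8
    (β : ℝ) (hβ : 0 < β) (μ : ℂ) (p : ℕ → ℂ)
    (hp0 : ∀ m, p m ≠ 0)
    (hp2 : ∀ m m', m ≠ m' → (p m) ^ 2 ≠ (p m') ^ 2)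
    (P : ℂ → ℂ)
    (hP : TendstoLocallyUniformly
      (fun N ω => ∏ m ∈ Finset.range N, (1 - ω ^ 2 / (p m) ^ 2)) P atTop)
    (n : ℕ)
    (hmul : Multipliable (fun m : {m : ℕ // m ≠ n} => 1 - (p n) ^ 2 / (p m) ^ 2))
    (hPi : (∏' m : {m : ℕ // m ≠ n}, (1 - (p n) ^ 2 / (p m) ^ 2)) ≠ 0) :
    Tendsto (fun ω => (ω - p n) * (μ * Complex.sinh ((β : ℂ) * ω / 2) / P ω)) (𝓝[≠] p n)
      (𝓝 (-μ * p n * Complex.sinh ((β : ℂ) * p n / 2) /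
        (2 * ∏' m : {m : ℕ // m ≠ n}, (1 - (p n) ^ 2 / (p m) ^ 2)))) :=
  stmt_8_general β μ p hp0 P hP n hmul hPi
end

section
/- (BTZ spectrum from Gamma functions.) Let β > 0 and k be real and 0 < ν < 1, and let Γ denote the complex Gamma function (with the convention Γ(s) = 0 exactly when s is a nonpositive integer). Then for ω ∈ ℂ, the product Γ((1+ν)/2 + iβ(k−ω)/(4π)) · Γ((1+ν)/2 − iβ(k+ω)/(4π)) vanishes if and only if there exists a natural number m ≥ 1 such that ω = k − (2πi/β)(2m+ν−1) or ω = −k − (2πi/β)(2m+ν−1); i.e. the Gamma-factor singularities of the BTZ scalar correlator occur exactly at the quasinormal frequencies ±k − (2πi/β)(2m+ν−1), m ≥ 1. -/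
/-! Γ vanishes exactly at the nonpositive integers `-n`, and both Gamma arguments are affine in `ω`;
solving `argument = -n` for `ω` gives the quasinormal frequency with `m = n + 1`. -/

open Complex

lemma gammaArg_eq_neg_natCast_iff {β : ℂ} (hβ : β ≠ 0) (ν κ ω : ℂ) (n : ℕ) :
    (1 + ν) / 2 + I * β * (κ - ω) / (4 * (Real.pi : ℂ)) = -n ↔
      ω = κ - (2 * (Real.pi : ℂ) * I / β) * (2 * ((n + 1 : ℕ) : ℂ) + ν - 1) := by
  have hπ : (Real.pi : ℂ) ≠ 0 := by exact_mod_cast Real.pi_ne_zero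
  push_cast
  constructor <;> intro h
  · field_simp at h ⊢
    linear_combination (I / 2) * h + β * (ω - κ) * I_sq
  · rw [h]
    field_simp
    linear_combination 4 * (Real.pi : ℂ) * (ν + 1 + 2 * n) * I_sq

lemma Nat.exists_one_le_iff_exists_succ {p : ℕ → Prop} : (∃ m, 1 ≤ m ∧ p m) ↔ ∃ n, p (n + 1) :=
  ⟨fun ⟨m, hm, h⟩ => ⟨m - 1, by rwa [Nat.sub_add_cancel hm]⟩,
    fun ⟨n, h⟩ => ⟨n + 1, Nat.le_add_left 1 n, h⟩⟩

theorem stmt_16_general (β k ν : ℝ) (hβ : 0 < β) (ω : ℂ) :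
    Complex.Gamma ((1 + (ν : ℂ)) / 2 + Complex.I * (β : ℂ) * ((k : ℂ) - ω) / (4 * (Real.pi : ℂ))) *
      Complex.Gamma ((1 + (ν : ℂ)) / 2 - Complex.I * (β : ℂ) * ((k : ℂ) + ω) / (4 * (Real.pi : ℂ))) = 0 ↔
    ∃ m : ℕ, 1 ≤ m ∧
      (ω = (k : ℂ) - (2 * (Real.pi : ℂ) * Complex.I / (β : ℂ)) * (2 * (m : ℂ) + (ν : ℂ) - 1) ∨
       ω = -(k : ℂ) - (2 * (Real.pi : ℂ) * Complex.I / (β : ℂ)) * (2 * (m : ℂ) + (ν : ℂ) - 1)) := by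
  have hβ' : (β : ℂ) ≠ 0 := by exact_mod_cast hβ.ne'
  have hsecond : (1 + (ν : ℂ)) / 2 - I * β * (k + ω) / (4 * (Real.pi : ℂ)) =
      (1 + (ν : ℂ)) / 2 + I * β * (-k - ω) / (4 * (Real.pi : ℂ)) := by ring
  rw [hsecond, mul_eq_zero, Gamma_eq_zero_iff, Gamma_eq_zero_iff, Nat.exists_one_le_iff_exists_succ,
    ← exists_or]
  simp only [gammaArg_eq_neg_natCast_iff hβ']

/-- BTZ spectrum from Gamma functions: the product of the two Gamma factors of the BTZ
scalar correlator vanishes exactly at the quasinormal frequencies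
`±k − (2πi/β)(2m+ν−1)`, `m ≥ 1`. -/
theorem stmt_16 (β k ν : ℝ) (hβ : 0 < β) (hν : 0 < ν) (hν1 : ν < 1) (ω : ℂ) :
    Complex.Gamma ((1 + (ν : ℂ)) / 2 + Complex.I * (β : ℂ) * ((k : ℂ) - ω) / (4 * (Real.pi : ℂ))) *
      Complex.Gamma ((1 + (ν : ℂ)) / 2 - Complex.I * (β : ℂ) * ((k : ℂ) + ω) / (4 * (Real.pi : ℂ))) = 0 ↔
    ∃ m : ℕ, 1 ≤ m ∧
      (ω = (k : ℂ) - (2 * (Real.pi : ℂ) * Complex.I / (β : ℂ)) * (2 * (m : ℂ) + (ν : ℂ) - 1) ∨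
       ω = -(k : ℂ) - (2 * (Real.pi : ℂ) * Complex.I / (β : ℂ)) * (2 * (m : ℂ) + (ν : ℂ) - 1)) :=
  stmt_16_general β k ν hβ ω
end

section
/- (Elementary symmetric polynomial expansion of the spectral duality relation.) Let β > 0, λ ∈ ℂ, and for each N let W_N be a finite multiset of complex numbers, with S_N(ω) := ∏_{w ∈ W_N} (1 + w·ω). Suppose S_N converges locally uniformly on ℂ to a function S satisfying S(ω) − S(−ω) = 2iλ·sinh(βω/2) for all ω ∈ ℂ. Then for every natural number j, the odd elementary symmetric polynomials converge: e_{2j+1}(W_N) → (iλ/(2j+1)!)·(β/2)^{2j+1} as N → ∞. -/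
/-!
`S_N` is the polynomial `∏ (1 + w X)`, whose `k`-th coefficient is `e_k(W_N)`, so
`e_k(W_N) = S_N^{(k)}(0) / k!`. By Weierstrass, locally uniform convergence of the entire
functions `S_N` carries over to all their derivatives, so `e_k(W_N) → S^{(k)}(0) / k!`. For odd
`k` the `k`-th derivative of `S(ω) - S(-ω)` at `0` is `2 S^{(k)}(0)`, while that of
`2iλ sinh(βω/2)` is `2iλ (β/2)^k`.
-/

open Complex Filter Topology Polynomial

namespace Multiset

variable {R : Type*} [CommSemiring R]

theorem esymm_zero (s : Multiset R) : s.esymm 0 = 1 := by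
  simp [esymm]

theorem esymm_cons_succ (a : R) (s : Multiset R) (k : ℕ) :
    (a ::ₘ s).esymm (k + 1) = s.esymm (k + 1) + a * s.esymm k := by
  simp only [esymm, powersetCard_cons, map_add, sum_add, map_map, ← sum_map_mul_left]
  congr 2
  exact map_congr rfl fun t _ => by simp [prod_cons]

theorem coeff_prod_one_add_C_mul_X (s : Multiset R) (k : ℕ) :
    (s.map fun w => 1 + C w * X).prod.coeff k = s.esymm k := by
  induction s using Multiset.induction generalizing k with
  | empty => cases k <;> simp [esymm, coeff_one, powersetCard_zero_right]
  | cons a s ih =>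
    rw [map_cons, prod_cons, add_mul, one_mul, mul_assoc, coeff_add, coeff_C_mul]
    cases k with
    | zero => simp [ih, esymm_zero]
    | succ k => rw [coeff_X_mul, ih, ih, esymm_cons_succ]

end Multiset

namespace Polynomial

variable {𝕜 : Type*} [NontriviallyNormedField 𝕜]

theorem iteratedDeriv_eval (p : 𝕜[X]) (k : ℕ) :
    iteratedDeriv k (fun x => p.eval x) = fun x => (derivative^[k] p).eval x := by
  induction k generalizing p with
  | zero => simp
  | succ k ih =>
    have hderiv : deriv (fun x => p.eval x) = fun x => (derivative p).eval x := by
      ext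
      exact Polynomial.deriv p
    rw [iteratedDeriv_succ', hderiv, ih, Function.iterate_succ_apply]

theorem iteratedDeriv_eval_zero (p : 𝕜[X]) (k : ℕ) :
    iteratedDeriv k (fun x => p.eval x) 0 = k.factorial * p.coeff k := by
  simp only [iteratedDeriv_eval]
  rw [← coeff_zero_eq_eval_zero, coeff_iterate_derivative, zero_add,
    Nat.descFactorial_self, nsmul_eq_mul]

end Polynomial

namespace Multiset

variable {𝕜 : Type*} [NontriviallyNormedField 𝕜]

theorem prod_map_one_add_mul_eq_eval (s : Multiset 𝕜) :
    (fun ω => (s.map fun w => 1 + w * ω).prod)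
      = fun ω => (s.map fun w => 1 + C w * X).prod.eval ω := by
  ext ω
  simp [eval_multiset_prod]

theorem differentiable_prod_map_one_add_mul (s : Multiset 𝕜) :
    Differentiable 𝕜 fun ω => (s.map fun w => 1 + w * ω).prod := by
  rw [prod_map_one_add_mul_eq_eval]
  exact Polynomial.differentiable _

theorem iteratedDeriv_prod_map_one_add_mul_zero (s : Multiset 𝕜) (k : ℕ) :
    iteratedDeriv k (fun ω => (s.map fun w => 1 + w * ω).prod) 0 = k.factorial * s.esymm k := by
  rw [prod_map_one_add_mul_eq_eval, iteratedDeriv_eval_zero, coeff_prod_one_add_C_mul_X]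

end Multiset

theorem TendstoLocallyUniformlyOn.iteratedDeriv {E ι : Type*} [NormedAddCommGroup E]
    [NormedSpace ℂ E] [CompleteSpace E] {φ : Filter ι} {F : ι → ℂ → E} {f : ℂ → E} {U : Set ℂ}
    (hf : TendstoLocallyUniformlyOn F f φ U) (hF : ∀ᶠ n in φ, DifferentiableOn ℂ (F n) U)
    (hU : IsOpen U) (k : ℕ) :
    TendstoLocallyUniformlyOn (fun n => iteratedDeriv k (F n)) (iteratedDeriv k f) φ U := by
  induction k with
  | zero => simpa using hf
  | succ k ih =>
    simp only [iteratedDeriv_succ]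
    refine ih.deriv ?_ hU
    filter_upwards [hF] with n hn
    rw [iteratedDeriv_eq_iterate]
    exact ((hn.analyticOnNhd hU).iterated_deriv k).differentiableOn

theorem iteratedDeriv_sub_comp_neg_zero_of_odd {𝕜 F : Type*} [NontriviallyNormedField 𝕜]
    [NormedAddCommGroup F] [NormedSpace 𝕜 F] {f : 𝕜 → F} {k : ℕ} (hk : Odd k)
    (hf : ContDiffAt 𝕜 k f 0) :
    iteratedDeriv k (fun x => f x - f (-x)) 0 = (2 : 𝕜) • iteratedDeriv k f 0 := by
  have hf_neg : ContDiffAt 𝕜 k (fun x => f (-x)) 0 :=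
    (neg_zero (G := 𝕜) ▸ hf).comp (0 : 𝕜) contDiff_neg.contDiffAt
  rw [iteratedDeriv_fun_sub hf hf_neg, iteratedDeriv_comp_neg, hk.neg_one_pow, neg_zero,
    two_smul]
  simp

theorem Complex.iteratedDeriv_odd_sinh_const_mul_zero (c : ℂ) (j : ℕ) :
    iteratedDeriv (2 * j + 1) (fun ω => sinh (c * ω)) 0 = c ^ (2 * j + 1) := by
  simp [iteratedDeriv_comp_const_mul contDiff_sinh]

theorem stmt_17_general
    (β : ℝ) (lam : ℂ)
    (W : ℕ → Multiset ℂ) (S : ℂ → ℂ)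
    (hconv : TendstoLocallyUniformly
      (fun N ω => ((W N).map (fun w => 1 + w * ω)).prod) S atTop)
    (hS : ∀ ω : ℂ, S ω - S (-ω) = 2 * Complex.I * lam * Complex.sinh ((β : ℂ) * ω / 2)) :
    ∀ j : ℕ, Tendsto (fun N => (W N).esymm (2 * j + 1)) atTop
      (𝓝 (Complex.I * lam / ((2 * j + 1).factorial : ℂ) * ((β : ℂ) / 2) ^ (2 * j + 1))) := by
  intro j
  set k := 2 * j + 1
  have hconv' := tendstoLocallyUniformlyOn_univ.2 hconv
  have hdiff : ∀ᶠ N in atTop, DifferentiableOn ℂ (fun ω => ((W N).map (1 + · * ω)).prod) .univ :=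
    .of_forall fun N => (W N).differentiable_prod_map_one_add_mul.differentiableOn
  have hS_entire : Differentiable ℂ S :=
    differentiableOn_univ.1 (hconv'.differentiableOn hdiff isOpen_univ)
  have hS_deriv : iteratedDeriv k S 0 = I * lam * (β / 2 : ℂ) ^ k := by
    refine mul_left_cancel₀ (two_ne_zero (α := ℂ)) ?_
    rw [← smul_eq_mul, ← iteratedDeriv_sub_comp_neg_zero_of_odd (odd_two_mul_add_one j)
      hS_entire.contDiff.contDiffAt, funext hS]
    simp_rw [show ∀ ω : ℂ, (β : ℂ) * ω / 2 = β / 2 * ω from fun ω => by ring]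
    rw [iteratedDeriv_const_mul_field, iteratedDeriv_odd_sinh_const_mul_zero]
    ring
  have hlim := (hconv'.iteratedDeriv hdiff isOpen_univ k).tendsto_at (Set.mem_univ 0)
  simp only [Multiset.iteratedDeriv_prod_map_one_add_mul_zero, hS_deriv] at hlim
  have hfac : (k.factorial : ℂ) ≠ 0 := by exact_mod_cast k.factorial_ne_zero
  convert hlim.const_mul (k.factorial : ℂ)⁻¹ using 2 <;> field_simp

/-- Elementary symmetric polynomial expansion of the spectral duality relation:
if `S_N(ω) = ∏_{w ∈ W_N} (1 + wω)` converges locally uniformly to `S` with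
`S(ω) − S(−ω) = 2iλ sinh(βω/2)`, then the odd elementary symmetric polynomials
of `W_N` converge to `(iλ/(2j+1)!)(β/2)^{2j+1}`. -/
theorem stmt_17
    (β : ℝ) (hβ : 0 < β) (lam : ℂ)
    (W : ℕ → Multiset ℂ) (S : ℂ → ℂ)
    (hconv : TendstoLocallyUniformly
      (fun N ω => ((W N).map (fun w => 1 + w * ω)).prod) S atTop)
    (hS : ∀ ω : ℂ, S ω - S (-ω) = 2 * Complex.I * lam * Complex.sinh ((β : ℂ) * ω / 2)) :
    ∀ j : ℕ, Tendsto (fun N => (W N).esymm (2 * j + 1)) atTop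
      (𝓝 (Complex.I * lam / ((2 * j + 1).factorial : ℂ) * ((β : ℂ) / 2) ^ (2 * j + 1))) :=
  stmt_17_general β lam W S hconv hS
end

section
/- (Digamma summation identity.) Let d, ξ, ω ∈ ℂ with d ≠ 0, set a := 1 + ξ − ω/d and b := 1 + ξ + ω/d, and assume neither a nor b is a nonpositive integer (equivalently, ω ≠ ±d(m+ξ) for every integer m ≥ 1, and each of a, b avoids {0, −1, −2, …}). Then the series ∑_{m=1}^{∞} [1/(ω − d(m+ξ)) + 1/(ω + d(m+ξ))] converges, and its sum equals (ψ(a) − ψ(b))/d, where ψ(s) := Γ'(s)/Γ(s) is the logarithmic derivative of the complex Gamma function. -/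
open Complex Filter Topology

/-- The digamma function `ψ(s) = Γ'(s)/Γ(s)`. -/
noncomputable def digamma (s : ℂ) : ℂ := deriv Complex.Gamma s / Complex.Gamma s

/-!
Off the poles, `ψ s - ψ 1 = ∑_{j ≥ 0} (1/(1+j) - 1/(s+j))`. For real `x > 0` this follows by
telescoping `ψ (s+1) = ψ s + 1/s` over `N` steps, since `ψ (x+N) - ψ (1+N) → 0`: by the
Bohr–Mollerup convexity of `log Γ`, `ψ` is increasing on `(0, ∞)`, which traps both values
between `ψ N` and `ψ (N+k) = ψ N + O(k/N)` for a fixed `k ≥ x`. Both sides are holomorphic on the connected set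
`ℂ ∖ {0, -1, -2, …}` (the series converges locally uniformly), so the identity theorem extends the
identity there. Subtracting the expansions at `a` and `b` and dividing by `d` gives the theorem.
-/

open Set

namespace Complex

theorem ne_neg_natCast_of_re_pos {s : ℂ} (hs : 0 < s.re) (m : ℕ) : s ≠ -m := fun h => by
  rw [h, neg_re, natCast_re] at hs
  linarith [m.cast_nonneg (α := ℝ)]

theorem digamma_add_nat {s : ℂ} (hs : ∀ m : ℕ, s ≠ -m) (n : ℕ) :
    digamma (s + n) = digamma s + ∑ j ∈ Finset.range n, (s + j)⁻¹ := by
  induction n with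
  | zero => simp
  | succ n ih =>
    have hsn : ∀ m : ℕ, s + n ≠ -m := fun m h => hs (m + n) (by push_cast; linear_combination h)
    rw [Nat.cast_succ, ← add_assoc, digamma_apply_add_one _ hsn, ih, Finset.sum_range_succ,
      add_assoc]

theorem digamma_ofReal {x : ℝ} (hx : 0 < x) :
    digamma x = ↑(deriv (Real.log ∘ Real.Gamma) x) := by
  have hΓ : HasDerivAt Real.Gamma (deriv Real.Gamma x) x :=
    (Real.differentiableAt_Gamma fun m => by linarith [m.cast_nonneg (α := ℝ)]).hasDerivAt
  have hΓc : HasDerivAt (fun y : ℝ => Gamma y) (deriv Gamma x) x :=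
    (differentiableAt_Gamma x (ne_neg_natCast_of_re_pos (by simpa))).hasDerivAt.comp_ofReal
  simp only [Gamma_ofReal] at hΓc
  rw [Function.comp_def, deriv.log hΓ.differentiableAt (Real.Gamma_pos_of_pos hx).ne',
    digamma_def, logDeriv_apply, hΓc.unique hΓ.ofReal_comp, Gamma_ofReal, ofReal_div]

end Complex

namespace Real

theorem monotoneOn_deriv_log_Gamma : MonotoneOn (deriv (log ∘ Gamma)) (Ioi 0) :=
  convexOn_log_Gamma.monotoneOn_deriv fun x hx =>
    (differentiableAt_Gamma fun m => by linarith [hx.out, m.cast_nonneg (α := ℝ)]).log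
      (Gamma_pos_of_pos hx).ne'

theorem deriv_log_Gamma_add_nat {x : ℝ} (hx : 0 < x) (n : ℕ) :
    deriv (log ∘ Gamma) (x + n) =
      deriv (log ∘ Gamma) x + ∑ j ∈ Finset.range n, (x + j)⁻¹ := by
  apply Complex.ofReal_injective
  rw [← Complex.digamma_ofReal (by positivity)]
  push_cast
  rw [← Complex.digamma_ofReal hx]
  exact Complex.digamma_add_nat (Complex.ne_neg_natCast_of_re_pos (by simpa)) n

theorem tendsto_deriv_log_Gamma_add_nat_sub {x y : ℝ} (hx : 0 < x) (hy : 0 < y) :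
    Tendsto (fun N : ℕ => deriv (log ∘ Gamma) (x + N) -
      deriv (log ∘ Gamma) (y + N)) atTop (𝓝 0) := by
  set g := deriv (log ∘ Gamma)
  obtain ⟨k, hk⟩ := exists_nat_ge (max x y)
  have hbound : ∀ᶠ N : ℕ in atTop,
      |g (x + N) - g (y + N)| ≤ ∑ j ∈ Finset.range k, ((N : ℝ) + j)⁻¹ := by
    filter_upwards [eventually_gt_atTop 0] with N hN
    have hN : (0 : ℝ) < N := Nat.cast_pos.2 hN
    have hmem : ∀ z : ℝ, 0 < z → z ≤ k →
        g (z + N) ∈ Icc (g N) (g N + ∑ j ∈ Finset.range k, ((N : ℝ) + j)⁻¹) := fun z hz hzk =>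
      ⟨monotoneOn_deriv_log_Gamma hN (by simp; positivity) (by linarith),
        deriv_log_Gamma_add_nat hN k ▸
          monotoneOn_deriv_log_Gamma (by simp; positivity) (by simp; positivity) (by linarith)⟩
    simpa [Real.dist_eq] using dist_le_of_mem_Icc (hmem x hx (le_of_max_le_left hk))
      (hmem y hy (le_of_max_le_right hk))
  refine squeeze_zero_norm' hbound ?_
  simpa using tendsto_finsetSum (Finset.range k) fun j _ =>
    tendsto_inv_atTop_zero.comp
      (tendsto_atTop_add_const_right _ (j : ℝ) tendsto_natCast_atTop_atTop)

theorem summable_const_div_natCast_sq (c : ℝ) : Summable fun j : ℕ => c / (j : ℝ) ^ 2 := by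
  simpa [div_eq_mul_inv] using (summable_nat_pow_inv.2 one_lt_two).mul_left c

end Real

namespace Complex

theorem tendsto_digamma_add_nat_sub {x y : ℝ} (hx : 0 < x) (hy : 0 < y) :
    Tendsto (fun N : ℕ => digamma ((x : ℂ) + N) - digamma ((y : ℂ) + N)) atTop (𝓝 0) := by
  have h := (continuous_ofReal.tendsto 0).comp (Real.tendsto_deriv_log_Gamma_add_nat_sub hx hy)
  rw [ofReal_zero] at h
  refine h.congr fun N => ?_
  rw [Function.comp_apply, ofReal_sub, ← digamma_ofReal (by positivity),
    ← digamma_ofReal (by positivity)]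
  push_cast
  rfl

def nonposInts : Set ℂ := range fun m : ℕ => -(m : ℂ)

theorem mem_nonposInts_compl {s : ℂ} : s ∈ nonposIntsᶜ ↔ ∀ m : ℕ, s ≠ -m := by
  simp [nonposInts, eq_comm]

theorem isOpen_nonposInts_compl : IsOpen nonposIntsᶜ := by
  refine (IsClosedEmbedding.isClosed_range ?_).isOpen_compl
  refine Metric.isClosedEmbedding_of_pairwise_le_dist one_pos fun m n hmn => ?_
  dsimp only
  rw [dist_neg_neg, dist_of_im_eq (by simp), natCast_re, natCast_re, Nat.dist_cast_real]
  exact Nat.pairwise_one_le_dist hmn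

theorem isPreconnected_nonposInts_compl : IsPreconnected nonposIntsᶜ :=
  ((countable_range _).isConnected_compl_of_one_lt_rank (by simp)).isPreconnected

theorem analyticOnNhd_digamma : AnalyticOnNhd ℂ digamma nonposIntsᶜ := by
  have hΓ : AnalyticOnNhd ℂ Gamma nonposIntsᶜ :=
    DifferentiableOn.analyticOnNhd (fun s hs =>
      (differentiableAt_Gamma s (mem_nonposInts_compl.1 hs)).differentiableWithinAt)
      isOpen_nonposInts_compl
  exact hΓ.deriv.div hΓ fun s hs => Gamma_ne_zero (mem_nonposInts_compl.1 hs)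

-- Since `0⁻¹ = 0`, the terms make sense for every `s`, poles included, and are summable in `j`.
noncomputable def digammaSeriesTerm (s : ℂ) (j : ℕ) : ℂ := (1 + j : ℂ)⁻¹ - (s + j)⁻¹

theorem norm_digammaSeriesTerm_le {R : ℝ} {s : ℂ} (hs : ‖s‖ ≤ R) {j : ℕ} (hj : 2 * R < j) :
    ‖digammaSeriesTerm s j‖ ≤ 2 * (R + 1) / j ^ 2 := by
  have hj0 : (0 : ℝ) < j := by linarith [(norm_nonneg s).trans hs]
  have h1j : ‖(1 + j : ℂ)‖ = 1 + j := by norm_cast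
  have hsj : (j : ℝ) / 2 ≤ ‖s + j‖ := by
    have := norm_sub_le (s + j) s
    rw [add_sub_cancel_left, norm_natCast] at this
    linarith
  have hsj0 : s + j ≠ 0 := norm_pos_iff.1 (by linarith)
  have hs1 : ‖s - 1‖ ≤ R + 1 := (norm_sub_le s 1).trans (by rw [norm_one]; linarith)
  have hterm : digammaSeriesTerm s j = (s - 1) / ((1 + j) * (s + j)) := by
    rw [digammaSeriesTerm, inv_sub_inv (by rw [add_comm]; exact_mod_cast j.succ_ne_zero) hsj0]
    ring
  calc ‖digammaSeriesTerm s j‖ = ‖s - 1‖ / ((1 + j) * ‖s + j‖) := by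
        rw [hterm, norm_div, norm_mul, h1j]
    _ ≤ (R + 1) / (j * (j / 2)) := by gcongr <;> linarith [norm_nonneg s]
    _ = 2 * (R + 1) / j ^ 2 := by field_simp

theorem eventually_norm_digammaSeriesTerm_le (R : ℝ) :
    ∀ᶠ j : ℕ in atTop, ∀ s : ℂ, ‖s‖ ≤ R → ‖digammaSeriesTerm s j‖ ≤ 2 * (R + 1) / j ^ 2 := by
  filter_upwards [tendsto_natCast_atTop_atTop.eventually_gt_atTop (2 * R)] with j hj s hs
  exact norm_digammaSeriesTerm_le hs hj

theorem summable_digammaSeriesTerm (s : ℂ) : Summable (digammaSeriesTerm s) :=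
  .of_norm_bounded_eventually_nat (Real.summable_const_div_natCast_sq _)
    ((eventually_norm_digammaSeriesTerm_le ‖s‖).mono fun _ h => h s le_rfl)

theorem differentiableOn_tsum_digammaSeriesTerm :
    DifferentiableOn ℂ (fun s => ∑' j, digammaSeriesTerm s j) nonposIntsᶜ := by
  refine SummableLocallyUniformlyOn.differentiableOn isOpen_nonposInts_compl
    (.of_locally_bounded_eventually isOpen_nonposInts_compl fun K _ hK => ?_) fun j s hs => ?_
  · obtain ⟨R, hR⟩ := isBounded_iff_forall_norm_le.1 hK.isBounded
    refine ⟨_, Real.summable_const_div_natCast_sq (2 * (R + 1)), ?_⟩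
    rw [Nat.cofinite_eq_atTop]
    exact (eventually_norm_digammaSeriesTerm_le R).mono fun j h s hs => h s (hR s hs)
  · have hsj : s + j ≠ 0 := fun h => mem_nonposInts_compl.1 hs j (eq_neg_of_add_eq_zero_left h)
    exact (differentiableAt_const _).sub ((differentiableAt_id.add_const _).inv hsj)

theorem hasSum_digammaSeriesTerm_ofReal {x : ℝ} (hx : 0 < x) :
    HasSum (digammaSeriesTerm x) (digamma x - digamma 1) := by
  refine (summable_digammaSeriesTerm _).hasSum_iff_tendsto_nat.2 ?_
  have hpartial : ∀ N : ℕ, ∑ j ∈ Finset.range N, digammaSeriesTerm x j =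
      digamma x - digamma 1 - (digamma (x + N) - digamma (1 + N)) := fun N => by
    rw [digamma_add_nat (ne_neg_natCast_of_re_pos (s := 1) (by simp)),
      digamma_add_nat (ne_neg_natCast_of_re_pos (by simpa))]
    unfold digammaSeriesTerm
    rw [Finset.sum_sub_distrib]
    ring
  simp_rw [hpartial]
  simpa using tendsto_const_nhds.sub (tendsto_digamma_add_nat_sub hx one_pos)

theorem hasSum_digammaSeriesTerm {s : ℂ} (hs : ∀ m : ℕ, s ≠ -m) :
    HasSum (digammaSeriesTerm s) (digamma s - digamma 1) := by
  have hone : (1 : ℂ) ∈ nonposIntsᶜ :=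
    mem_nonposInts_compl.2 (ne_neg_natCast_of_re_pos (by simp))
  have hreal : ∃ᶠ z in 𝓝[≠] (1 : ℂ), digamma z - digamma 1 = ∑' j, digammaSeriesTerm z j := by
    have hmaps : Tendsto ofReal (𝓝[≠] 1) (𝓝[≠] 1) :=
      continuous_ofReal.continuousWithinAt.tendsto_nhdsWithin fun x hx => by simpa using hx
    refine hmaps.frequently (Eventually.frequently ?_)
    filter_upwards [nhdsWithin_le_nhds (eventually_gt_nhds one_pos)] with x hx
    exact (hasSum_digammaSeriesTerm_ofReal hx).tsum_eq.symm
  have h : digamma s - digamma 1 = ∑' j, digammaSeriesTerm s j :=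
    (analyticOnNhd_digamma.sub analyticOnNhd_const).eqOn_of_preconnected_of_frequently_eq
    (differentiableOn_tsum_digammaSeriesTerm.analyticOnNhd isOpen_nonposInts_compl)
    isPreconnected_nonposInts_compl hone hreal (mem_nonposInts_compl.2 hs)
  exact h ▸ (summable_digammaSeriesTerm s).hasSum

theorem hasSum_inv_add_nat_sub_inv_add_nat {a b : ℂ} (ha : ∀ m : ℕ, a ≠ -m)
    (hb : ∀ m : ℕ, b ≠ -m) :
    HasSum (fun j : ℕ => (b + j)⁻¹ - (a + j)⁻¹) (digamma a - digamma b) := by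
  have hterm (j : ℕ) : digammaSeriesTerm a j - digammaSeriesTerm b j = (b + j)⁻¹ - (a + j)⁻¹ := by
    unfold digammaSeriesTerm
    ring
  simpa only [hterm, sub_sub_sub_cancel_right] using
    (hasSum_digammaSeriesTerm ha).sub (hasSum_digammaSeriesTerm hb)

end Complex

/-- Digamma summation identity:
`∑_{m≥1} [1/(ω − d(m+ξ)) + 1/(ω + d(m+ξ))] = (ψ(1+ξ−ω/d) − ψ(1+ξ+ω/d))/d`
provided neither argument of `ψ` is a nonpositive integer. -/
theorem stmt_19
    (d ξ ω : ℂ) (hd : d ≠ 0)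
    (ha : ∀ m : ℕ, 1 + ξ - ω / d ≠ -(m : ℂ))
    (hb : ∀ m : ℕ, 1 + ξ + ω / d ≠ -(m : ℂ)) :
    Summable (fun m : ℕ =>
      1 / (ω - d * ((m : ℂ) + 1 + ξ)) + 1 / (ω + d * ((m : ℂ) + 1 + ξ))) ∧
    (∑' m : ℕ,
        (1 / (ω - d * ((m : ℂ) + 1 + ξ)) + 1 / (ω + d * ((m : ℂ) + 1 + ξ)))) =
      (_root_.digamma (1 + ξ - ω / d) - _root_.digamma (1 + ξ + ω / d)) / d := by
  have hterm (m : ℕ) : 1 / (ω - d * ((m : ℂ) + 1 + ξ)) + 1 / (ω + d * ((m : ℂ) + 1 + ξ)) =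
      ((1 + ξ + ω / d + m)⁻¹ - (1 + ξ - ω / d + m)⁻¹) / d := by
    rw [show ω - d * (m + 1 + ξ) = -(d * (1 + ξ - ω / d + m)) by field_simp; ring,
      show ω + d * (m + 1 + ξ) = d * (1 + ξ + ω / d + m) by field_simp; ring]
    simp only [one_div, inv_neg, mul_inv]
    ring
  have h := (Complex.hasSum_inv_add_nat_sub_inv_add_nat ha hb).div_const d
  simp only [← hterm] at h
  exact ⟨h.summable, h.tsum_eq⟩
end
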